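/- arXiv:0911.4204 — 5 statements merged into one kernel-verified Lean document; each statement's English description precedes it below -/
import Mathlib

section
/- For every integer n ≥ 2, the largest integer expressible as a product of positive integers whose sum is n equals: 3^i if n = 3i; 4·3^(i-1) if n = 3i+1; and 2·3^i if n = 3i+2. Moreover ℓ(1) = 1. -/
/-- `ProdOfSum n m` holds if `m` can be written as the product of a nonempty list of
positive integers whose sum is `n`. -/
def ProdOfSum (n m : ℕ) : Prop :=
  ∃ l : List ℕ, l ≠ [] ∧ (∀ a ∈ l, 0 < a) ∧ l.sum = n ∧ l.prod = m

private def f : ℕ → ℕ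
  | 0 => 1
  | 1 => 1
  | 2 => 2
  | 3 => 3
  | 4 => 4
  | (n+5) => 3 * f (n+2)

private lemma f_add5 (n : ℕ) : f (n+5) = 3 * f (n+2) := rfl

private lemma f_step (n : ℕ) : 3 * f n ≤ f (n+3) := by
  match n with
  | 0 => norm_num [f]
  | 1 => norm_num [f]
  | (m+2) => rw [show m+2+3 = m+5 by ring, f_add5]

private lemma f_succ : ∀ n, f n ≤ f (n+1)
  | 0 => by norm_num [f]
  | 1 => by norm_num [f]
  | 2 => by norm_num [f]
  | 3 => by norm_num [f]
  | 4 => by norm_num [f]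
  | (m+5) => by
      rw [f_add5, show m+5+1 = (m+1)+5 by ring, f_add5]
      exact Nat.mul_le_mul_left 3 (f_succ (m+2))

private lemma f_two : ∀ b, 2 * f b ≤ f (b+2)
  | 0 => by norm_num [f]
  | 1 => by norm_num [f]
  | 2 => by norm_num [f]
  | 3 => by norm_num [f, f_add5]
  | 4 => by norm_num [f, f_add5]
  | (m+5) => by
      rw [f_add5, show m+5+2 = (m+2)+5 by ring, f_add5]
      calc 2 * (3 * f (m+2)) = 3 * (2 * f (m+2)) := by ring
        _ ≤ 3 * f (m+4) := Nat.mul_le_mul_left 3 (f_two (m+2))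

private lemma f_four : ∀ b, 4 * f b ≤ f (b+4)
  | 0 => by norm_num [f]
  | 1 => by norm_num [f, f_add5]
  | 2 => by norm_num [f, f_add5]
  | 3 => by norm_num [f, f_add5]
  | 4 => by norm_num [f, f_add5]
  | (m+5) => by
      rw [f_add5, show m+5+4 = (m+4)+5 by ring, f_add5]
      calc 4 * (3 * f (m+2)) = 3 * (4 * f (m+2)) := by ring
        _ ≤ 3 * f (m+6) := Nat.mul_le_mul_left 3 (f_four (m+2))

private lemma le_f : ∀ a, a ≤ f a
  | 0 => by norm_num [f]
  | 1 => by norm_num [f]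
  | 2 => by norm_num [f]
  | 3 => by norm_num [f]
  | 4 => by norm_num [f]
  | (m+5) => by
      rw [f_add5]
      have := le_f (m+2)
      omega

private lemma f_mul : ∀ a b, f a * f b ≤ f (a + b)
  | 0, b => by simpa [f] using le_refl (f b)
  | 1, b => by
      rw [show (1:ℕ) + b = b + 1 by ring]
      simpa [f] using f_succ b
  | 2, b => by
      rw [show (2:ℕ) + b = b + 2 by ring]
      simpa [f] using f_two b
  | 3, b => by
      rw [show (3:ℕ) + b = b + 3 by ring]
      simpa [f] using f_step b
  | 4, b => by
      rw [show (4:ℕ) + b = b + 4 by ring]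
      simpa [f] using f_four b
  | (m+5), b => by
      rw [f_add5]
      calc 3 * f (m+2) * f b = 3 * (f (m+2) * f b) := by ring
        _ ≤ 3 * f (m+2+b) := Nat.mul_le_mul_left 3 (f_mul (m+2) b)
        _ ≤ f (m+2+b+3) := f_step _
        _ = f (m+5+b) := by ring_nf

private lemma prod_le_f (l : List ℕ) : l.prod ≤ f l.sum := by
  induction l with
  | nil => simp [f]
  | cons a t ih =>
      rw [List.prod_cons, List.sum_cons]
      exact (Nat.mul_le_mul (le_f a) ih).trans (f_mul a t.sum)

private lemma f_val3 : ∀ i, f (3*i+3) = 3^(i+1)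
  | 0 => by norm_num [f]
  | (i+1) => by
      rw [show 3*(i+1)+3 = (3*i+1)+5 by ring, f_add5,
        show 3*i+1+2 = 3*i+3 by ring, f_val3 i]
      ring

private lemma f_val1 : ∀ i, f (3*i+4) = 4 * 3^i
  | 0 => by norm_num [f]
  | (i+1) => by
      rw [show 3*(i+1)+4 = (3*i+2)+5 by ring, f_add5,
        show 3*i+2+2 = 3*i+4 by ring, f_val1 i]
      ring

private lemma f_val2 : ∀ i, f (3*i+2) = 2 * 3^i
  | 0 => by norm_num [f]
  | (i+1) => by
      rw [show 3*(i+1)+2 = (3*i)+5 by ring, f_add5, f_val2 i]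
      ring

private lemma ub (n v : ℕ) (h : f n = v) : v ∈ upperBounds {m | ProdOfSum n m} := by
  rintro m ⟨l, -, -, hs, hp⟩
  calc m = l.prod := hp.symm
    _ ≤ f l.sum := prod_le_f l
    _ = v := by rw [hs, h]

theorem largest_product_of_sum :
    IsGreatest {m | ProdOfSum 1 m} 1 ∧
    (∀ i : ℕ, 1 ≤ i → IsGreatest {m | ProdOfSum (3 * i) m} (3 ^ i)) ∧
    (∀ i : ℕ, 1 ≤ i → IsGreatest {m | ProdOfSum (3 * i + 1) m} (4 * 3 ^ (i - 1))) ∧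
    (∀ i : ℕ, IsGreatest {m | ProdOfSum (3 * i + 2) m} (2 * 3 ^ i)) := by
  refine ⟨⟨⟨[1], by simp⟩, ub 1 1 (by norm_num [f])⟩, ?_, ?_, ?_⟩
  · intro i hi
    obtain ⟨j, rfl⟩ : ∃ j, i = j + 1 := ⟨i - 1, by omega⟩
    constructor
    · exact ⟨List.replicate (j+1) 3, by simp, by simp, by
        simp [List.sum_replicate]; ring, by simp⟩
    · exact ub _ _ (by rw [show 3*(j+1) = 3*j+3 by ring, f_val3])
  · intro i hi
    obtain ⟨j, rfl⟩ : ∃ j, i = j + 1 := ⟨i - 1, by omega⟩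
    constructor
    · refine ⟨2 :: 2 :: List.replicate j 3, by simp, ?_, ?_, ?_⟩
      · intro a ha
        simp only [List.mem_cons, List.mem_replicate] at ha
        omega
      · simp [List.sum_replicate]; ring
      · simp; ring
    · exact ub _ _ (by rw [show 3*(j+1)+1 = 3*j+4 by ring, f_val1]; simp)
  · intro i
    constructor
    · refine ⟨2 :: List.replicate i 3, by simp, ?_, ?_, ?_⟩
      · intro a ha
        simp only [List.mem_cons, List.mem_replicate] at ha
        omega
      · simp [List.sum_replicate]; ring
      · simp
    · exact ub _ _ (f_val2 i)
end

section
/- (Cai–Yao) For every integer m ≥ 2: s(m) = 3i if 2·3^(i-1) < m ≤ 3^i; s(m) = 3i+1 if 3^i < m ≤ 4·3^(i-1); and s(m) = 3i+2 if 4·3^(i-1) < m ≤ 2·3^i. Moreover s(1) = 1. -/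
/-- A family `F` of `k` subsets of the ground set `Fin m` is a separating cover if the
sets cover the ground set and for every pair of distinct elements `x, y` there are
disjoint sets in the family with `x` in one and `y` in the other. -/
def IsSepCover {m k : ℕ} (F : Fin k → Set (Fin m)) : Prop :=
  (∀ x : Fin m, ∃ i, x ∈ F i) ∧
  ∀ x y : Fin m, x ≠ y → ∃ i j, x ∈ F i ∧ y ∈ F j ∧ Disjoint (F i) (F j)

/-- `sepNum m` is the minimum number of sets in a separating cover on an `m`-element ground set. -/
noncomputable def sepNum (m : ℕ) : ℕ := sInf {k | ∃ F : Fin k → Set (Fin m), IsSepCover F}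


def gMM : ℕ → ℕ
  | 0 => 1
  | 1 => 1
  | 2 => 2
  | 3 => 3
  | 4 => 4
  | (n+5) => 3 * gMM (n+2)

lemma gMM_eq5 (k : ℕ) : gMM (k+5) = 3 * gMM (k+2) := rfl

lemma gMM_add_three {n : ℕ} (hn : 2 ≤ n) : gMM (n + 3) = 3 * gMM n := by
  obtain ⟨k, rfl⟩ := Nat.exists_eq_add_of_le hn
  have h1 : 2 + k + 3 = k + 5 := by omega
  have h2 : 2 + k = k + 2 := by omega
  rw [h1, h2, gMM_eq5]

lemma gMM_pos (n : ℕ) : 1 ≤ gMM n := by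
  induction n using Nat.strong_induction_on with
  | _ n IH =>
    match n with
    | 0 => decide
    | 1 => decide
    | 2 => decide
    | 3 => decide
    | 4 => decide
    | (k+5) =>
      have := IH (k+2) (by omega)
      rw [gMM_eq5]; omega

lemma gMM_le_succ (n : ℕ) : gMM n ≤ gMM (n+1) := by
  induction n using Nat.strong_induction_on with
  | _ n IH =>
    match n with
    | 0 => decide
    | 1 => decide
    | 2 => decide
    | 3 => decide
    | 4 => decide
    | (k+5) =>
      have h := IH (k+2) (by omega)
      rw [show k+5+1 = k+6 by omega]
      rw [show k+2+1 = k+3 by omega] at h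
      have e1 : gMM (k+5) = 3 * gMM (k+2) := rfl
      have e2 : gMM (k+6) = 3 * gMM (k+3) := rfl
      omega

lemma gMM_mono : Monotone gMM := monotone_nat_of_le_succ gMM_le_succ

lemma gMM_two_mul (b : ℕ) : 2 * gMM b ≤ gMM (b+2) := by
  induction b using Nat.strong_induction_on with
  | _ b IH =>
    match b with
    | 0 => decide
    | 1 => decide
    | 2 => decide
    | 3 => decide
    | 4 => decide
    | (k+5) =>
      have h := IH (k+2) (by omega)
      rw [show k+5+2 = k+7 by omega]
      have e1 : gMM (k+5) = 3 * gMM (k+2) := rfl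
      have e2 : gMM (k+7) = 3 * gMM (k+4) := rfl
      have e3 : gMM (k+2+2) = gMM (k+4) := by rw [show k+2+2 = k+4 by omega]
      omega

lemma gMM_four_step (b : ℕ) (hb : 1 ≤ b) : 4 * gMM b ≤ 3 * gMM (b+1) := by
  induction b using Nat.strong_induction_on with
  | _ b IH =>
    match b with
    | 0 => omega
    | 1 => decide
    | 2 => decide
    | 3 => decide
    | 4 => decide
    | (k+5) =>
      have h := IH (k+2) (by omega) (by omega)
      rw [show k+5+1 = k+6 by omega]
      have e1 : gMM (k+5) = 3 * gMM (k+2) := rfl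
      have e2 : gMM (k+6) = 3 * gMM (k+3) := rfl
      have e3 : gMM (k+2+1) = gMM (k+3) := by rw [show k+2+1 = k+3 by omega]
      omega

lemma gMM_mul_le (a b : ℕ) (ha : 1 ≤ a) : a * gMM b ≤ gMM (a + b) := by
  induction a using Nat.strong_induction_on generalizing b with
  | _ a IH =>
    match a with
    | 0 => omega
    | 1 =>
      rw [one_mul, show 1+b = b+1 by omega]
      exact gMM_le_succ b
    | 2 =>
      rw [show 2+b = b+2 by omega]
      exact gMM_two_mul b
    | 3 =>
      match b with
      | 0 => decide
      | 1 => decide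
      | (c+2) =>
        rw [show 3+(c+2) = c+2+3 by omega, gMM_add_three (show 2 ≤ c+2 by omega)]
    | 4 =>
      match b with
      | 0 => decide
      | (c+1) =>
        rw [show 4+(c+1) = c+2+3 by omega, gMM_add_three (show 2 ≤ c+2 by omega)]
        have h1 := gMM_four_step (c+1) (by omega)
        rw [show c+1+1 = c+2 by omega] at h1
        omega
    | (k+5) =>
      have h1 : (k+5) * gMM b ≤ 2 * ((k+3) * gMM b) := by
        have := gMM_pos b
        nlinarith
      have h2 : (k+3) * gMM b ≤ gMM (k+3+b) := IH (k+3) (by omega) b (by omega)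
      have h3 : 2 * gMM (k+3+b) ≤ gMM (k+3+b+2) := gMM_two_mul (k+3+b)
      rw [show k+3+b+2 = k+5+b by omega] at h3
      omega

lemma gMM_3i (i : ℕ) : gMM (3*i) = 3^i := by
  induction i with
  | zero => decide
  | succ i ih =>
    rcases Nat.eq_zero_or_pos i with rfl | hi
    · decide
    · have e : 3*(i+1) = 3*i+3 := by ring
      rw [e, gMM_add_three (by omega), ih, pow_succ]; ring

lemma gMM_3i1 (i : ℕ) (hi : 1 ≤ i) : gMM (3*i+1) = 4 * 3^(i-1) := by
  induction i, hi using Nat.le_induction with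
  | base => decide
  | succ i hi ih =>
    have e : 3*(i+1)+1 = (3*i+1)+3 := by ring
    rw [e, gMM_add_three (by omega), ih]
    have e2 : i + 1 - 1 = (i-1)+1 := by omega
    rw [e2, pow_succ]; ring

lemma gMM_3i2 (i : ℕ) : gMM (3*i+2) = 2 * 3^i := by
  induction i with
  | zero => decide
  | succ i ih =>
    have e : 3*(i+1)+2 = (3*i+2)+3 := by ring
    rw [e, gMM_add_three (by omega), ih, pow_succ]; ring

lemma gMM_one : gMM 1 = 1 := rfl
lemma gMM_small : gMM 0 = 1 ∧ gMM 1 = 1 ∧ gMM 2 = 2 ∧ gMM 3 = 3 ∧ gMM 4 = 4 :=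
  ⟨rfl, rfl, rfl, rfl, rfl⟩

open Finset
attribute [local instance] Classical.propDecidable

section counting

variable {V : Type} [DecidableEq V] (E : V → V → Prop)

def indepF (s : Finset V) : Prop := ∀ i ∈ s, ∀ j ∈ s, ¬ E i j

def maxIn (A s : Finset V) : Prop :=
  s ⊆ A ∧ indepF E s ∧ ∀ v ∈ A, indepF E (insert v s) → v ∈ s

noncomputable def misSet (A : Finset V) : Finset (Finset V) :=
  A.powerset.filter (maxIn E A)

lemma mem_misSet {A s : Finset V} : s ∈ misSet E A ↔ maxIn E A s := by
  unfold misSet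
  rw [Finset.mem_filter, Finset.mem_powerset]
  exact ⟨fun h => h.2, fun h => ⟨h.1, h⟩⟩

lemma indepF_mono {s t : Finset V} (h : s ⊆ t) (ht : indepF E t) : indepF E s :=
  fun i hi j hj => ht i (h hi) j (h hj)

lemma exists_maxIn_extension {A s : Finset V} (hsA : s ⊆ A) (hs : indepF E s) :
    ∃ t, s ⊆ t ∧ maxIn E A t := by
  classical
  obtain ⟨t, ht, hmax⟩ := Finset.exists_max_image
    (A.powerset.filter (fun t => s ⊆ t ∧ indepF E t)) Finset.card
    ⟨s, by simp [hsA, hs, Finset.mem_filter, Finset.mem_powerset]⟩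
  rw [Finset.mem_filter, Finset.mem_powerset] at ht
  refine ⟨t, ht.2.1, ht.1, ht.2.2, fun v hv hvind => ?_⟩
  by_contra hvt
  have hmem : insert v t ∈ A.powerset.filter (fun t => s ⊆ t ∧ indepF E t) := by
    rw [Finset.mem_filter, Finset.mem_powerset]
    exact ⟨Finset.insert_subset hv ht.1, ht.2.1.trans (Finset.subset_insert v t), hvind⟩
  have := hmax _ hmem
  rw [Finset.card_insert_of_notMem hvt] at this
  omega

lemma maxIn_erase (hE : ∀ i j, E i j → E j i) {A s : Finset V} {u : V}
    (hs : maxIn E A s) (hus : u ∈ s) :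
    maxIn E (A \ A.filter (fun w => w = u ∨ E w u)) (s.erase u) := by
  classical
  obtain ⟨hsA, hind, hmax⟩ := hs
  refine ⟨?_, indepF_mono E (Finset.erase_subset u s) hind, ?_⟩
  · intro i hi
    obtain ⟨hiu, his⟩ := Finset.mem_erase.mp hi
    rw [Finset.mem_sdiff]
    refine ⟨hsA his, ?_⟩
    rw [Finset.mem_filter]
    rintro ⟨-, rfl | hEiu⟩
    · exact hiu rfl
    · exact hind i his u hus hEiu
  · intro w hw hwind
    rw [Finset.mem_sdiff, Finset.mem_filter] at hw
    obtain ⟨hwA, hwC⟩ := hw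
    have hwu : w ≠ u := fun h => hwC ⟨hwA, Or.inl h⟩
    have hwEu : ¬ E w u := fun h => hwC ⟨hwA, Or.inr h⟩
    have hins : indepF E (insert w s) := by
      intro i hi j hj
      rcases Finset.mem_insert.mp hi with rfl | his
      · rcases Finset.mem_insert.mp hj with rfl | hjs
        · exact hwind _ (Finset.mem_insert_self _ _) _ (Finset.mem_insert_self _ _)
        · rcases eq_or_ne j u with rfl | hju
          · exact hwEu
          · exact hwind i (Finset.mem_insert_self _ _) j
              (Finset.mem_insert_of_mem (Finset.mem_erase.mpr ⟨hju, hjs⟩))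
      · rcases Finset.mem_insert.mp hj with rfl | hjs
        · rcases eq_or_ne i u with rfl | hiu
          · exact fun h => hwEu (hE _ _ h)
          · exact hwind i (Finset.mem_insert_of_mem (Finset.mem_erase.mpr ⟨hiu, his⟩)) j
              (Finset.mem_insert_self _ _)
        · exact hind i his j hjs
    have hws : w ∈ s := hmax w hwA hins
    exact Finset.mem_erase.mpr ⟨hwu, hws⟩

lemma misSet_card_le (hE : ∀ i j, E i j → E j i) :
    ∀ n (A : Finset V), A.card ≤ n → (misSet E A).card ≤ gMM A.card := by
  intro n
  induction n with
  | zero =>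
    intro A hA
    have hA0 : A = ∅ := Finset.card_eq_zero.mp (by omega)
    subst hA0
    have h1 : (misSet E ∅).card ≤ 1 := by
      apply Finset.card_le_one.mpr
      intro a ha b hb
      have ha' := ((mem_misSet E).mp ha).1
      have hb' := ((mem_misSet E).mp hb).1
      rw [Finset.subset_empty] at ha' hb'
      rw [ha', hb']
    calc (misSet E ∅).card ≤ 1 := h1
      _ ≤ gMM (∅ : Finset V).card := gMM_pos _
  | succ n IH =>
    intro A hA
    rcases Nat.lt_or_ge A.card (n+1) with hlt | hge
    · exact IH A (by omega)
    have hAn : A.card = n + 1 := by omega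
    classical
    set W : Finset V := A.filter (fun v => ¬ E v v) with hWdef
    set Cf : V → Finset V := fun u => A.filter (fun w => w = u ∨ E w u) with hCdef
    rcases Finset.eq_empty_or_nonempty W with hWe | hWne
    · -- all vertices have loops, only MIS is ∅
      have h1 : (misSet E A).card ≤ 1 := by
        apply Finset.card_le_one.mpr
        intro a ha b hb
        have key : ∀ s ∈ misSet E A, s = ∅ := by
          intro s hsm
          obtain ⟨hsA, hind, -⟩ := (mem_misSet E).mp hsm
          apply Finset.eq_empty_of_forall_notMem
          intro i his
          have hiW : i ∈ W := Finset.mem_filter.mpr ⟨hsA his, hind i his i his⟩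
          rw [hWe] at hiW
          exact absurd hiW (Finset.notMem_empty i)
        rw [key a ha, key b hb]
      exact h1.trans (gMM_pos _)
    · obtain ⟨v, hvW, hvmin⟩ := Finset.exists_min_image W (fun u => (Cf u).card) hWne
      obtain ⟨hvA, hvloop⟩ := Finset.mem_filter.mp hvW
      have hCfA : ∀ u, Cf u ⊆ A := fun u => Finset.filter_subset _ _
      have hself : ∀ u ∈ A, u ∈ Cf u := fun u hu => Finset.mem_filter.mpr ⟨hu, Or.inl rfl⟩
      -- every MIS meets Cf v
      have hcover : ∀ s ∈ misSet E A, ∃ u ∈ Cf v, u ∈ s := by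
        intro s hsm
        obtain ⟨hsA, hind, hmax⟩ := (mem_misSet E).mp hsm
        by_cases hvs : v ∈ s
        · exact ⟨v, hself v hvA, hvs⟩
        · have hnind : ¬ indepF E (insert v s) := fun h => hvs (hmax v hvA h)
          unfold indepF at hnind
          push_neg at hnind
          obtain ⟨i, hi, j, hj, hEij⟩ := hnind
          rcases Finset.mem_insert.mp hi with rfl | his
          · rcases Finset.mem_insert.mp hj with rfl | hjs
            · exact absurd hEij hvloop
            · exact ⟨j, Finset.mem_filter.mpr ⟨hsA hjs, Or.inr (hE _ _ hEij)⟩, hjs⟩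
          · rcases Finset.mem_insert.mp hj with rfl | hjs
            · exact ⟨i, Finset.mem_filter.mpr ⟨hsA his, Or.inr hEij⟩, his⟩
            · exact absurd hEij (hind i his j hjs)
      have hsub : misSet E A ⊆ (Cf v).biUnion
          (fun u => (misSet E A).filter (fun s => u ∈ s)) := by
        intro s hsm
        obtain ⟨u, huC, hus⟩ := hcover s hsm
        exact Finset.mem_biUnion.mpr ⟨u, huC, Finset.mem_filter.mpr ⟨hsm, hus⟩⟩
      have hCv1 : 1 ≤ (Cf v).card := Finset.card_pos.mpr ⟨v, hself v hvA⟩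
      have hCvA : (Cf v).card ≤ A.card := Finset.card_le_card (hCfA v)
      -- per-u bound
      have hper : ∀ u ∈ Cf v,
          ((misSet E A).filter (fun s => u ∈ s)).card ≤ gMM (A.card - (Cf v).card) := by
        intro u huC
        obtain ⟨huA, -⟩ := Finset.mem_filter.mp huC
        by_cases hEuu : E u u
        · have : (misSet E A).filter (fun s => u ∈ s) = ∅ := by
            apply Finset.eq_empty_of_forall_notMem
            intro s hs
            obtain ⟨hsm, hus⟩ := Finset.mem_filter.mp hs
            exact ((mem_misSet E).mp hsm).2.1 u hus u hus hEuu
          rw [this]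
          simp [gMM_pos]
        · have huW : u ∈ W := Finset.mem_filter.mpr ⟨huA, hEuu⟩
          have hmin := hvmin u huW
          have hCu1 : 1 ≤ (Cf u).card := Finset.card_pos.mpr ⟨u, hself u huA⟩
          have hcard_sd : (A \ Cf u).card = A.card - (Cf u).card :=
            Finset.card_sdiff_of_subset (hCfA u)
          have hmaps : ∀ s ∈ (misSet E A).filter (fun s => u ∈ s),
              s.erase u ∈ misSet E (A \ Cf u) := by
            intro s hs
            obtain ⟨hsm, hus⟩ := Finset.mem_filter.mp hs
            exact (mem_misSet E).mpr (maxIn_erase E hE ((mem_misSet E).mp hsm) hus)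
          have hinj : Set.InjOn (fun s : Finset V => s.erase u)
              ↑((misSet E A).filter (fun s => u ∈ s)) := by
            intro s1 hs1 s2 hs2 heq
            have hu1 : u ∈ s1 := (Finset.mem_filter.mp hs1).2
            have hu2 : u ∈ s2 := (Finset.mem_filter.mp hs2).2
            rw [← Finset.insert_erase hu1, ← Finset.insert_erase hu2]
            simp only at heq
            rw [heq]
          have h1 : ((misSet E A).filter (fun s => u ∈ s)).card
              ≤ (misSet E (A \ Cf u)).card :=
            Finset.card_le_card_of_injOn _ hmaps hinj
          have h2 : (misSet E (A \ Cf u)).card ≤ gMM ((A \ Cf u).card) :=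
            IH (A \ Cf u) (by omega)
          have h3 : (A \ Cf u).card ≤ A.card - (Cf v).card := by omega
          exact h1.trans (h2.trans (gMM_mono h3))
      calc (misSet E A).card
          ≤ ((Cf v).biUnion (fun u => (misSet E A).filter (fun s => u ∈ s))).card :=
            Finset.card_le_card hsub
        _ ≤ ∑ u ∈ Cf v, ((misSet E A).filter (fun s => u ∈ s)).card :=
            Finset.card_biUnion_le
        _ ≤ ∑ _u ∈ Cf v, gMM (A.card - (Cf v).card) := Finset.sum_le_sum hper
        _ = (Cf v).card * gMM (A.card - (Cf v).card) := by
            rw [Finset.sum_const, smul_eq_mul]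
        _ ≤ gMM ((Cf v).card + (A.card - (Cf v).card)) := gMM_mul_le _ _ hCv1
        _ = gMM A.card := by rw [Nat.add_sub_cancel' hCvA]

end counting

-- ### Lower bound
lemma sepCover_card_le {m k : ℕ} (F : Fin k → Set (Fin m)) (h : IsSepCover F) :
    m ≤ gMM k := by
  classical
  set E : Fin k → Fin k → Prop := fun i j => Disjoint (F i) (F j) with hEdef
  have hE : ∀ i j, E i j → E j i := fun i j hd => hd.symm
  have hJ : ∀ x : Fin m, ∃ t : Finset (Fin k),
      (Finset.univ.filter (fun i => x ∈ F i)) ⊆ t ∧ maxIn E Finset.univ t := by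
    intro x
    apply exists_maxIn_extension E (Finset.subset_univ _)
    intro i hi j hj
    rw [Finset.mem_filter] at hi hj
    exact fun hd => (Set.disjoint_left.mp hd hi.2) hj.2
  choose J hJ1 hJ2 using hJ
  have hinj : Set.InjOn J ↑(Finset.univ : Finset (Fin m)) := by
    intro x _ y _ hxy
    by_contra hne
    obtain ⟨i, j, hxi, hyj, hdisj⟩ := h.2 x y hne
    have hiJ : i ∈ J x := hJ1 x (Finset.mem_filter.mpr ⟨Finset.mem_univ i, hxi⟩)
    have hjJ : j ∈ J x := by
      rw [hxy]; exact hJ1 y (Finset.mem_filter.mpr ⟨Finset.mem_univ j, hyj⟩)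
    exact (hJ2 x).2.1 i hiJ j hjJ hdisj
  have hmaps : ∀ x ∈ (Finset.univ : Finset (Fin m)), J x ∈ misSet E Finset.univ :=
    fun x _ => (mem_misSet E).mpr (hJ2 x)
  have h1 := Finset.card_le_card_of_injOn J hmaps hinj
  have h2 := misSet_card_le E hE (Finset.univ : Finset (Fin k)).card Finset.univ le_rfl
  have e1 : (Finset.univ : Finset (Fin m)).card = m := by simp
  have e2 : (Finset.univ : Finset (Fin k)).card = k := by simp
  rw [e1] at h1
  rw [e2] at h2
  omega

-- ### Constructions
def SCC (α ι : Type) : Prop :=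
  ∃ F : ι → Set α, (∀ x, ∃ i, x ∈ F i) ∧
    ∀ x y : α, x ≠ y → ∃ i j, x ∈ F i ∧ y ∈ F j ∧ Disjoint (F i) (F j)

lemma scc_reindex {α ι ι' : Type} (e : ι ≃ ι') (h : SCC α ι) : SCC α ι' := by
  obtain ⟨F, h1, h2⟩ := h
  refine ⟨F ∘ e.symm, fun x => ?_, fun x y hxy => ?_⟩
  · obtain ⟨i, hi⟩ := h1 x
    exact ⟨e i, by simpa using hi⟩
  · obtain ⟨i, j, hi, hj, hd⟩ := h2 x y hxy
    exact ⟨e i, e j, by simpa using hi, by simpa using hj, by simpa using hd⟩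

lemma scc_comap {α β ι : Type} (f : α → β) (hf : Function.Injective f)
    (h : SCC β ι) : SCC α ι := by
  obtain ⟨F, h1, h2⟩ := h
  refine ⟨fun i => f ⁻¹' F i, fun x => h1 (f x), fun x y hxy => ?_⟩
  obtain ⟨i, j, hi, hj, hd⟩ := h2 (f x) (f y) (fun hc => hxy (hf hc))
  exact ⟨i, j, hi, hj, hd.preimage f⟩

lemma scc_prod {α β ι κ : Type} (hα : SCC α ι) (hβ : SCC β κ) : SCC (α × β) (ι ⊕ κ) := by
  obtain ⟨F, hF1, hF2⟩ := hα
  obtain ⟨G, hG1, hG2⟩ := hβ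
  refine ⟨Sum.elim (fun i => Prod.fst ⁻¹' F i) (fun j => Prod.snd ⁻¹' G j),
    fun p => ?_, fun p q hpq => ?_⟩
  · obtain ⟨i, hi⟩ := hF1 p.1
    exact ⟨Sum.inl i, hi⟩
  · rcases eq_or_ne p.1 q.1 with he | hne
    · have hne2 : p.2 ≠ q.2 := fun h2 => hpq (Prod.ext he h2)
      obtain ⟨i, j, hi, hj, hd⟩ := hG2 p.2 q.2 hne2
      exact ⟨Sum.inr i, Sum.inr j, hi, hj, hd.preimage Prod.snd⟩
    · obtain ⟨i, j, hi, hj, hd⟩ := hF2 p.1 q.1 hne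
      exact ⟨Sum.inl i, Sum.inl j, hi, hj, hd.preimage Prod.fst⟩

lemma scc_fin (a : ℕ) : SCC (Fin a) (Fin a) := by
  refine ⟨fun i => {i}, fun x => ⟨x, rfl⟩, fun x y hxy => ⟨x, y, rfl, rfl, ?_⟩⟩
  exact Set.disjoint_singleton.mpr hxy

lemma scc_g : ∀ n, 1 ≤ n → SCC (Fin (gMM n)) (Fin n) := by
  intro n
  induction n using Nat.strong_induction_on with
  | _ n IH =>
    match n with
    | 0 => omega
    | 1 => intro _; rw [gMM_small.2.1]; exact scc_fin 1
    | 2 => intro _; rw [gMM_small.2.2.1]; exact scc_fin 2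
    | 3 => intro _; rw [gMM_small.2.2.2.1]; exact scc_fin 3
    | 4 => intro _; rw [gMM_small.2.2.2.2]; exact scc_fin 4
    | (k+5) =>
      intro _
      have hk : SCC (Fin (gMM (k+2))) (Fin (k+2)) := IH (k+2) (by omega) (by omega)
      have h3 : SCC (Fin 3) (Fin 3) := scc_fin 3
      have hp : SCC (Fin 3 × Fin (gMM (k+2))) (Fin 3 ⊕ Fin (k+2)) := scc_prod h3 hk
      have hα : SCC (Fin (3 * gMM (k+2))) (Fin 3 ⊕ Fin (k+2)) :=
        scc_comap (finProdFinEquiv.symm : Fin (3 * gMM (k+2)) ≃ Fin 3 × Fin (gMM (k+2)))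
          (Equiv.injective _) hp
      rw [gMM_eq5]
      have e : 3 + (k+2) = k+5 := by omega
      have := scc_reindex (finSumFinEquiv : Fin 3 ⊕ Fin (k+2) ≃ Fin (3 + (k+2))) hα
      rwa [e] at this

lemma sepNum_mem {m n : ℕ} (hn : 1 ≤ n) (hm : m ≤ gMM n) :
    n ∈ {k | ∃ F : Fin k → Set (Fin m), IsSepCover F} := by
  have h := scc_comap (Fin.castLE hm) (Fin.castLE_injective hm) (scc_g n hn)
  obtain ⟨F, h1, h2⟩ := h
  exact ⟨F, h1, h2⟩

lemma sepNum_eq {m n : ℕ} (hn : 1 ≤ n) (hub : m ≤ gMM n) (hlb : gMM (n-1) < m) :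
    sepNum m = n := by
  have hmem := sepNum_mem hn hub
  have hub2 : sepNum m ≤ n := Nat.sInf_le hmem
  have hinf : sepNum m ∈ {k | ∃ F : Fin k → Set (Fin m), IsSepCover F} :=
    Nat.sInf_mem (⟨n, hmem⟩ : {k | ∃ F : Fin k → Set (Fin m), IsSepCover F}.Nonempty)
  obtain ⟨F, hF⟩ := hinf
  have hcard := sepCover_card_le F hF
  have hlow : n ≤ sepNum m := by
    by_contra hc
    push_neg at hc
    have : gMM (sepNum m) ≤ gMM (n-1) := gMM_mono (by omega)
    omega
  omega

/-- Cai–Yao: the value of `sepNum m` for all `m ≥ 2` (side conditions are stated multiplied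
through by 3, e.g. `2·3^(i-1) < m ≤ 3^i` becomes `2·3^i < 3·m ∧ m ≤ 3^i`), and `sepNum 1 = 1`. -/
theorem cai_yao :
    sepNum 1 = 1 ∧
    ∀ m : ℕ, 2 ≤ m → ∀ i : ℕ,
      ((2 * 3 ^ i < 3 * m ∧ m ≤ 3 ^ i) → sepNum m = 3 * i) ∧
      ((3 ^ i < m ∧ 3 * m ≤ 4 * 3 ^ i) → sepNum m = 3 * i + 1) ∧
      ((4 * 3 ^ i < 3 * m ∧ m ≤ 2 * 3 ^ i) → sepNum m = 3 * i + 2) := by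
  constructor
  · -- sepNum 1 = 1
    have hmem := sepNum_mem (m := 1) (n := 1) le_rfl (by rw [gMM_one])
    have hub : sepNum 1 ≤ 1 := Nat.sInf_le hmem
    have hinf : sepNum 1 ∈ {k | ∃ F : Fin k → Set (Fin 1), IsSepCover F} :=
      Nat.sInf_mem (⟨1, hmem⟩ : {k | ∃ F : Fin k → Set (Fin 1), IsSepCover F}.Nonempty)
    have hne : sepNum 1 ≠ 0 := by
      intro h0
      rw [h0] at hinf
      obtain ⟨F, hF⟩ := hinf
      obtain ⟨i, -⟩ := hF.1 0
      exact i.elim0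
    omega
  · intro m hm i
    refine ⟨fun ⟨h1, h2⟩ => ?_, fun ⟨h1, h2⟩ => ?_, fun ⟨h1, h2⟩ => ?_⟩
    · -- case 3i
      have hi : 1 ≤ i := by
        rcases Nat.eq_zero_or_pos i with rfl | h
        · norm_num at h2; omega
        · exact h
      have hpow : (3:ℕ)^i = 3 * 3^(i-1) := by
        conv_lhs => rw [show i = (i-1)+1 by omega]
        rw [pow_succ]; ring
      apply sepNum_eq (by omega)
      · rw [gMM_3i]; exact h2
      · rw [show 3*i-1 = 3*(i-1)+2 by omega, gMM_3i2]
        rw [hpow] at h1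
        omega
    · -- case 3i+1
      have hi : 1 ≤ i := by
        rcases Nat.eq_zero_or_pos i with rfl | h
        · norm_num at h2; omega
        · exact h
      have hpow : (3:ℕ)^i = 3 * 3^(i-1) := by
        conv_lhs => rw [show i = (i-1)+1 by omega]
        rw [pow_succ]; ring
      apply sepNum_eq (by omega)
      · rw [gMM_3i1 i hi]
        rw [hpow] at h2
        omega
      · rw [show 3*i+1-1 = 3*i by omega, gMM_3i]
        exact h1
    · -- case 3i+2
      apply sepNum_eq (by omega)
      · rw [gMM_3i2]; exact h2
      · rcases Nat.eq_zero_or_pos i with rfl | hi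
        · rw [show 3*0+2-1 = 1 by omega, gMM_one]; omega
        · rw [show 3*i+2-1 = 3*i+1 by omega, gMM_3i1 i hi]
          have hpow : (3:ℕ)^i = 3 * 3^(i-1) := by
            conv_lhs => rw [show i = (i-1)+1 by omega]
            rw [pow_succ]; ring
          rw [hpow] at h1
          omega
end

section
/- For every positive integer n, s(ℓ(n)) = n; that is, s is a left inverse of ℓ. -/
open scoped Classical

/-- `ell n` is the largest integer expressible as a product of positive integers summing to `n`. -/
noncomputable def ell (n : ℕ) : ℕ := sSup {m | ProdOfSum n m}

/-- convenience: `L n = max 1 (ell n)`. -/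
noncomputable def eL (n : ℕ) : ℕ := max 1 (ell n)

lemma prod_le_two_pow_sum : ∀ l : List ℕ, l.prod ≤ 2 ^ l.sum := by
  intro l
  induction l with
  | nil => simp
  | cons a t ih =>
    simp only [List.prod_cons, List.sum_cons, pow_add]
    exact Nat.mul_le_mul (Nat.le_of_lt (Nat.lt_two_pow_self (n := a))) ih

lemma pos_bddAbove (n : ℕ) : BddAbove {m | ProdOfSum n m} := by
  refine ⟨2 ^ n, ?_⟩
  rintro m ⟨l, -, -, hs, hp⟩
  subst hs hp
  exact prod_le_two_pow_sum l

lemma le_ell {n m : ℕ} (h : ProdOfSum n m) : m ≤ ell n :=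
  le_csSup (pos_bddAbove n) h

lemma pos_nonempty {n : ℕ} (hn : 1 ≤ n) : {m | ProdOfSum n m}.Nonempty :=
  ⟨n, [n], by simp, by simpa using Nat.lt_of_lt_of_le Nat.zero_lt_one hn, by simp, by simp⟩

lemma ell_mem {n : ℕ} (hn : 1 ≤ n) : ProdOfSum n (ell n) :=
  Nat.sSup_mem (pos_nonempty hn) (pos_bddAbove n)

lemma ell_ge_self {n : ℕ} (hn : 1 ≤ n) : n ≤ ell n :=
  le_ell ⟨[n], by simp, by simpa using Nat.lt_of_lt_of_le Nat.zero_lt_one hn, by simp, by simp⟩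

lemma ell_zero : ell 0 = 0 := by
  have : {m | ProdOfSum 0 m} = ∅ := by
    ext m
    simp only [Set.mem_setOf_eq, Set.mem_empty_iff_false, iff_false]
    rintro ⟨l, hne, hpos, hs, -⟩
    rcases List.exists_mem_of_ne_nil l hne with ⟨a, ha⟩
    have h1 := hpos a ha
    have h2 : a ≤ l.sum := List.single_le_sum (fun x hx => Nat.zero_le x) a ha
    omega
  rw [ell, this]
  exact csSup_empty

lemma ell_pos {n : ℕ} (hn : 1 ≤ n) : 1 ≤ ell n := le_trans hn (ell_ge_self hn)

lemma eL_of_pos {n : ℕ} (hn : 1 ≤ n) : eL n = ell n := by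
  simp [eL, Nat.max_eq_right (ell_pos hn)]

lemma eL_zero : eL 0 = 1 := by simp [eL, ell_zero]

lemma one_le_eL (n : ℕ) : 1 ≤ eL n := le_max_left _ _

lemma prod_pos_of_pos {l : List ℕ} (h : ∀ a ∈ l, 0 < a) : 0 < l.prod := by
  induction l with
  | nil => simp
  | cons a t ih =>
    simp only [List.prod_cons]
    exact Nat.mul_pos (h a (by simp)) (ih (fun x hx => h x (by simp [hx])))

lemma ell_mono : ∀ {m n : ℕ}, 1 ≤ m → m ≤ n → ell m ≤ ell n := by
  intro m n hm hmn
  obtain ⟨l, hne, hpos, hs, hp⟩ := ell_mem hm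
  refine le_ell ⟨l ++ List.replicate (n - m) 1, by simp [hne], ?_, ?_, ?_⟩
  · intro a ha
    rcases List.mem_append.1 ha with h | h
    · exact hpos a h
    · simp [List.eq_of_mem_replicate h]
  · simp [hs, List.sum_replicate]; omega
  · simp [hp]

lemma eL_mono {m n : ℕ} (h : m ≤ n) : eL m ≤ eL n := by
  rcases Nat.eq_zero_or_pos m with rfl | hm
  · simp [eL_zero, one_le_eL]
  · rw [eL_of_pos hm, eL_of_pos (le_trans hm h)]
    exact ell_mono hm h

lemma ell_strict {n : ℕ} (hn : 1 ≤ n) : ell n < ell (n + 1) := by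
  obtain ⟨l, hne, hpos, hs, hp⟩ := ell_mem hn
  rcases l with _ | ⟨a, t⟩
  · exact absurd rfl hne
  have htpos : 0 < t.prod := prod_pos_of_pos (fun x hx => hpos x (by simp [hx]))
  have h1 : ProdOfSum (n+1) ((a+1) * t.prod) := by
    refine ⟨(a+1) :: t, by simp, ?_, ?_, by simp⟩
    · intro x hx
      rcases List.mem_cons.1 hx with rfl | hx
      · omega
      · exact hpos x (by simp [hx])
    · simp at hs ⊢; omega
  have h2 : ell n < (a+1) * t.prod := by
    have heq : ell n = a * t.prod := by rw [← hp]; simp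
    rw [heq]
    exact (Nat.mul_lt_mul_right htpos).2 (by omega)
  exact lt_of_lt_of_le h2 (le_ell h1)

lemma ell_mul_le {a b : ℕ} (ha : 1 ≤ a) (hb : 1 ≤ b) : ell a * ell b ≤ ell (a + b) := by
  obtain ⟨l, hne, hpos, hs, hp⟩ := ell_mem ha
  obtain ⟨l', hne', hpos', hs', hp'⟩ := ell_mem hb
  refine le_ell ⟨l ++ l', by simp [hne], ?_, by simp [hs, hs'], by simp [hp, hp']⟩
  intro x hx
  rcases List.mem_append.1 hx with h | h
  · exact hpos x h
  · exact hpos' x h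

lemma eL_mul_le (a b : ℕ) : eL a * eL b ≤ eL (a + b) := by
  rcases Nat.eq_zero_or_pos a with rfl | ha
  · simp [eL_zero]
  rcases Nat.eq_zero_or_pos b with rfl | hb
  · simp [eL_zero]
  rw [eL_of_pos ha, eL_of_pos hb, eL_of_pos (by omega)]
  exact ell_mul_le ha hb

/-- prepend a part `c` to a witness: `c * eL (n - c) ≤ ell n` for `1 ≤ c ≤ n`. -/
lemma ell_ge_mul {c n : ℕ} (hc : 1 ≤ c) (hcn : c ≤ n) : c * eL (n - c) ≤ ell n := by
  rcases Nat.eq_zero_or_pos (n - c) with h0 | hpos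
  · have : c = n := by omega
    subst this
    rw [h0, eL_zero, Nat.mul_one]
    exact ell_ge_self hc
  · rw [eL_of_pos hpos]
    obtain ⟨l, hne, hposl, hs, hp⟩ := ell_mem hpos
    refine le_ell ⟨c :: l, by simp, ?_, ?_, by simp [hp]⟩
    · intro x hx
      rcases List.mem_cons.1 hx with rfl | hx
      · exact hc
      · exact hposl x hx
    · simp [hs]; omega

/-- head decomposition: `ell n` is at most `a * eL (n-a)` for some valid head `a`. -/
lemma ell_char {n : ℕ} (hn : 1 ≤ n) : ∃ a, 1 ≤ a ∧ a ≤ n ∧ ell n ≤ a * eL (n - a) := by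
  obtain ⟨l, hne, hpos, hs, hp⟩ := ell_mem hn
  rcases l with _ | ⟨a, t⟩
  · exact absurd rfl hne
  have ha : 1 ≤ a := hpos a (by simp)
  have hsum : a + t.sum = n := by simpa using hs
  refine ⟨a, ha, by omega, ?_⟩
  have hts : t.sum = n - a := by omega
  have hprod : ell n = a * t.prod := by rw [← hp]; simp
  rw [hprod]
  refine Nat.mul_le_mul_left a ?_
  rcases t with _ | ⟨b, t'⟩
  · simpa using one_le_eL (n - a)
  · have hpos' : 1 ≤ (b :: t').sum := by
      have := hpos b (by simp)
      simp only [List.sum_cons]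
      omega
    have : (b :: t').prod ≤ ell (n - a) := by
      rw [← hts]
      exact le_ell ⟨b :: t', by simp, fun x hx => hpos x (by simp [hx]), rfl, rfl⟩
    rw [eL_of_pos (by omega)]
    exact this

lemma ell_one : ell 1 = 1 := by
  obtain ⟨a, h1, h2, h3⟩ := ell_char (le_refl 1)
  interval_cases a
  · exact le_antisymm (by simpa [eL_zero] using h3) (ell_ge_self (le_refl 1))

lemma eL_one : eL 1 = 1 := by rw [eL_of_pos (by norm_num), ell_one]

lemma ell_two : ell 2 = 2 := by
  obtain ⟨a, h1, h2, h3⟩ := ell_char (by norm_num : (1:ℕ) ≤ 2)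
  have hge := ell_ge_self (by norm_num : (1:ℕ) ≤ 2)
  interval_cases a
  · simp only [show (2:ℕ)-1 = 1 from rfl, eL_one, Nat.mul_one] at h3; omega
  · simp only [Nat.sub_self, eL_zero, Nat.mul_one] at h3; omega

lemma eL_two : eL 2 = 2 := by rw [eL_of_pos (by norm_num), ell_two]

lemma ell_three : ell 3 = 3 := by
  obtain ⟨a, h1, h2, h3⟩ := ell_char (by norm_num : (1:ℕ) ≤ 3)
  have hge := ell_ge_self (by norm_num : (1:ℕ) ≤ 3)
  interval_cases a
  · simp only [show (3:ℕ)-1 = 2 from rfl, eL_two] at h3; omega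
  · simp only [show (3:ℕ)-2 = 1 from rfl, eL_one] at h3; omega
  · simp only [Nat.sub_self, eL_zero] at h3; omega

lemma eL_three : eL 3 = 3 := by rw [eL_of_pos (by norm_num), ell_three]

lemma ell_four : ell 4 = 4 := by
  obtain ⟨a, h1, h2, h3⟩ := ell_char (by norm_num : (1:ℕ) ≤ 4)
  have hge := ell_ge_self (by norm_num : (1:ℕ) ≤ 4)
  interval_cases a
  · simp only [show (4:ℕ)-1 = 3 from rfl, eL_three] at h3; omega
  · simp only [show (4:ℕ)-2 = 2 from rfl, eL_two] at h3; omega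
  · simp only [show (4:ℕ)-3 = 1 from rfl, eL_one] at h3; omega
  · simp only [Nat.sub_self, eL_zero] at h3; omega

lemma eL_four : eL 4 = 4 := by rw [eL_of_pos (by norm_num), ell_four]

lemma ell_five : ell 5 = 6 := by
  obtain ⟨a, h1, h2, h3⟩ := ell_char (by norm_num : (1:ℕ) ≤ 5)
  have hge := ell_ge_mul (c := 2) (n := 5) (by norm_num) (by norm_num)
  rw [show (5:ℕ)-2 = 3 from rfl, eL_three] at hge
  interval_cases a
  · simp only [show (5:ℕ)-1 = 4 from rfl, eL_four] at h3; omega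
  · simp only [show (5:ℕ)-2 = 3 from rfl, eL_three] at h3; omega
  · simp only [show (5:ℕ)-3 = 2 from rfl, eL_two] at h3; omega
  · simp only [show (5:ℕ)-4 = 1 from rfl, eL_one] at h3; omega
  · simp only [Nat.sub_self, eL_zero] at h3; omega

lemma eL_five : eL 5 = 6 := by rw [eL_of_pos (by norm_num), ell_five]

lemma ell_six : ell 6 = 9 := by
  obtain ⟨a, h1, h2, h3⟩ := ell_char (by norm_num : (1:ℕ) ≤ 6)
  have hge := ell_ge_mul (c := 3) (n := 6) (by norm_num) (by norm_num)
  rw [show (6:ℕ)-3 = 3 from rfl, eL_three] at hge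
  interval_cases a
  · simp only [show (6:ℕ)-1 = 5 from rfl, eL_five] at h3; omega
  · simp only [show (6:ℕ)-2 = 4 from rfl, eL_four] at h3; omega
  · simp only [show (6:ℕ)-3 = 3 from rfl, eL_three] at h3; omega
  · simp only [show (6:ℕ)-4 = 2 from rfl, eL_two] at h3; omega
  · simp only [show (6:ℕ)-5 = 1 from rfl, eL_one] at h3; omega
  · simp only [Nat.sub_self, eL_zero] at h3; omega

lemma eL_six : eL 6 = 9 := by rw [eL_of_pos (by norm_num), ell_six]

theorem ell_RA : ∀ n : ℕ, (5 ≤ n → 4 * ell (n-4) ≤ 3 * ell (n-3)) ∧ (5 ≤ n → ell n = 3 * ell (n-3)) := by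
  intro n
  induction n using Nat.strong_induction_on with
  | _ n IH =>
  have hA : 5 ≤ n → 4 * ell (n-4) ≤ 3 * ell (n-3) := by
    intro h5
    rcases Nat.lt_or_ge n 9 with h9 | h9
    · interval_cases n
      · rw [show (5:ℕ)-4 = 1 from rfl, show (5:ℕ)-3 = 2 from rfl, ell_one, ell_two]; omega
      · rw [show (6:ℕ)-4 = 2 from rfl, show (6:ℕ)-3 = 3 from rfl, ell_two, ell_three]; omega
      · rw [show (7:ℕ)-4 = 3 from rfl, show (7:ℕ)-3 = 4 from rfl, ell_three, ell_four]
      · rw [show (8:ℕ)-4 = 4 from rfl, show (8:ℕ)-3 = 5 from rfl, ell_four, ell_five]; omega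
    · -- n ≥ 9
      have hR4 : ell (n-4) = 3 * ell (n-4-3) := (IH (n-4) (by omega)).2 (by omega)
      have hA3 : 4 * ell (n-3-4) ≤ 3 * ell (n-3-3) := (IH (n-3) (by omega)).1 (by omega)
      have hR3 : ell (n-3) = 3 * ell (n-3-3) := (IH (n-3) (by omega)).2 (by omega)
      have e1 : n-4-3 = n-3-4 := by omega
      rw [hR4, hR3, e1]
      omega
  refine ⟨hA, fun h5 => ?_⟩
  have hge : 3 * ell (n-3) ≤ ell n := by
    have := ell_ge_mul (c := 3) (n := n) (by norm_num) (by omega)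
    rwa [eL_of_pos (by omega)] at this
  have hle : ell n ≤ 3 * ell (n-3) := by
    obtain ⟨a, h1, h2, h3⟩ := ell_char (by omega : 1 ≤ n)
    rcases Nat.lt_or_ge a 5 with ha5 | ha5
    · interval_cases a
      · -- a = 1
        rw [eL_of_pos (by omega), Nat.one_mul] at h3
        rcases Nat.lt_or_ge n 6 with h6 | h6
        · have hn5 : n = 5 := by omega
          subst hn5
          rw [show (5:ℕ)-1 = 4 from rfl, ell_four] at h3
          rw [show (5:ℕ)-3 = 2 from rfl, ell_two]
          omega
        · have hR1 : ell (n-1) = 3 * ell (n-1-3) := (IH (n-1) (by omega)).2 (by omega)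
          have hmono : ell (n-1-3) ≤ ell (n-3) := ell_mono (by omega) (by omega)
          omega
      · -- a = 2
        rw [eL_of_pos (by omega)] at h3
        rcases Nat.lt_or_ge n 7 with h7 | h7
        · interval_cases n
          · rw [show (5:ℕ)-2 = 3 from rfl, ell_three] at h3
            rw [show (5:ℕ)-3 = 2 from rfl, ell_two]; omega
          · rw [show (6:ℕ)-2 = 4 from rfl, ell_four] at h3
            rw [show (6:ℕ)-3 = 3 from rfl, ell_three]; omega
        · have hR2 : ell (n-2) = 3 * ell (n-2-3) := (IH (n-2) (by omega)).2 (by omega)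
          have h2e : 2 * eL (n-3-2) ≤ ell (n-3) :=
            ell_ge_mul (c := 2) (n := n-3) (by norm_num) (by omega)
          rw [eL_of_pos (by omega)] at h2e
          have e1 : n-3-2 = n-2-3 := by omega
          rw [e1] at h2e
          omega
      · -- a = 3
        rw [eL_of_pos (by omega)] at h3
        exact h3
      · -- a = 4
        rw [eL_of_pos (by omega)] at h3
        have := hA h5
        omega
    · -- a ≥ 5
      have key : (a-3) * eL (n-3-(a-3)) ≤ ell (n-3) :=
        ell_ge_mul (by omega) (by omega)
      have e1 : n-3-(a-3) = n-a := by omega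
      rw [e1] at key
      calc ell n ≤ a * eL (n-a) := h3
        _ ≤ 3 * ((a-3) * eL (n-a)) := by
            have h1le : 1 ≤ eL (n-a) := one_le_eL _
            have : a ≤ 3 * (a-3) := by omega
            calc a * eL (n-a) ≤ (3*(a-3)) * eL (n-a) := Nat.mul_le_mul_right _ this
              _ = 3 * ((a-3) * eL (n-a)) := by ring
        _ ≤ 3 * ell (n-3) := by omega
  omega

lemma ell_R {n : ℕ} (h : 5 ≤ n) : ell n = 3 * ell (n-3) := (ell_RA n).2 h

lemma ell_seven : ell 7 = 12 := by
  rw [ell_R (by norm_num), show (7:ℕ)-3 = 4 from rfl, ell_four]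

lemma ell_eight : ell 8 = 18 := by
  rw [ell_R (by norm_num), show (8:ℕ)-3 = 5 from rfl, ell_five]

lemma eL_seven : eL 7 = 12 := by rw [eL_of_pos (by norm_num), ell_seven]
lemma eL_eight : eL 8 = 18 := by rw [eL_of_pos (by norm_num), ell_eight]

lemma two_eL {k : ℕ} (h : 2 ≤ k) : 2 * eL (k-2) ≤ ell k :=
  ell_ge_mul (by norm_num) h

lemma three_eL {k : ℕ} (h : 3 ≤ k) : 3 * eL (k-3) ≤ ell k :=
  ell_ge_mul (by norm_num) h

lemma eL_R {n : ℕ} (h : 5 ≤ n) : eL n = 3 * eL (n-3) := by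
  rw [eL_of_pos (by omega), eL_of_pos (by omega)]
  exact ell_R h

/-- numeric lemma for the `deg ≥ 3` case -/
lemma numN1 : ∀ k, 4 ≤ k → eL (k-1) + eL (k-4) ≤ ell k := by
  intro k
  induction k using Nat.strong_induction_on with
  | _ k IH =>
  intro h4
  rcases Nat.lt_or_ge k 9 with h9 | h9
  · interval_cases k
    · rw [show (4:ℕ)-1 = 3 from rfl, show (4:ℕ)-4 = 0 from rfl, eL_three, eL_zero, ell_four]
    · rw [show (5:ℕ)-1 = 4 from rfl, show (5:ℕ)-4 = 1 from rfl, eL_four, eL_one, ell_five]; omega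
    · rw [show (6:ℕ)-1 = 5 from rfl, show (6:ℕ)-4 = 2 from rfl, eL_five, eL_two, ell_six]; omega
    · rw [show (7:ℕ)-1 = 6 from rfl, show (7:ℕ)-4 = 3 from rfl, eL_six, eL_three, ell_seven]
    · rw [show (8:ℕ)-1 = 7 from rfl, show (8:ℕ)-4 = 4 from rfl, eL_seven, eL_four, ell_eight]; omega
  · have h1 : eL (k-1) = 3 * eL (k-1-3) := eL_R (by omega)
    have h2 : eL (k-4) = 3 * eL (k-4-3) := eL_R (by omega)
    have h3 : ell k = 3 * ell (k-3) := ell_R (by omega)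
    have hIH : eL (k-3-1) + eL (k-3-4) ≤ ell (k-3) := IH (k-3) (by omega) (by omega)
    have e1 : k-1-3 = k-3-1 := by omega
    have e2 : k-4-3 = k-3-4 := by omega
    rw [h1, h2, h3, e1, e2]
    omega

/-- numeric lemma for the path-type (Q) recursion -/
lemma numN2 : ∀ k, 4 ≤ k → 2 * eL (k-4) + eL (k-3) ≤ 2 * eL (k-2) := by
  intro k
  induction k using Nat.strong_induction_on with
  | _ k IH =>
  intro h4
  rcases Nat.lt_or_ge k 9 with h9 | h9
  · interval_cases k
    · rw [show (4:ℕ)-4 = 0 from rfl, show (4:ℕ)-3 = 1 from rfl, show (4:ℕ)-2 = 2 from rfl,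
        eL_zero, eL_one, eL_two]; omega
    · rw [show (5:ℕ)-4 = 1 from rfl, show (5:ℕ)-3 = 2 from rfl, show (5:ℕ)-2 = 3 from rfl,
        eL_one, eL_two, eL_three]; omega
    · rw [show (6:ℕ)-4 = 2 from rfl, show (6:ℕ)-3 = 3 from rfl, show (6:ℕ)-2 = 4 from rfl,
        eL_two, eL_three, eL_four]; omega
    · rw [show (7:ℕ)-4 = 3 from rfl, show (7:ℕ)-3 = 4 from rfl, show (7:ℕ)-2 = 5 from rfl,
        eL_three, eL_four, eL_five]; omega
    · rw [show (8:ℕ)-4 = 4 from rfl, show (8:ℕ)-3 = 5 from rfl, show (8:ℕ)-2 = 6 from rfl,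
        eL_four, eL_five, eL_six]; omega
  · have h1 : eL (k-4) = 3 * eL (k-4-3) := eL_R (by omega)
    have h2 : eL (k-3) = 3 * eL (k-3-3) := eL_R (by omega)
    have h3 : eL (k-2) = 3 * eL (k-2-3) := eL_R (by omega)
    have hIH : 2 * eL (k-3-4) + eL (k-3-3) ≤ 2 * eL (k-3-2) := IH (k-3) (by omega) (by omega)
    have e1 : k-4-3 = k-3-4 := by omega
    have e2 : k-2-3 = k-3-2 := by omega
    rw [h1, h2, h3, e1, e2]
    omega

/-- numeric lemma: two-component 2-regular case, both parts ≥ 2 -/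
lemma numN5 : ∀ k, 5 ≤ k → 4 * eL (k-5) + eL (k-3) ≤ ell k := by
  intro k
  induction k using Nat.strong_induction_on with
  | _ k IH =>
  intro h5
  rcases Nat.lt_or_ge k 10 with h10 | h10
  · interval_cases k
    · rw [show (5:ℕ)-5 = 0 from rfl, show (5:ℕ)-3 = 2 from rfl, eL_zero, eL_two, ell_five]
    · rw [show (6:ℕ)-5 = 1 from rfl, show (6:ℕ)-3 = 3 from rfl, eL_one, eL_three, ell_six]; omega
    · rw [show (7:ℕ)-5 = 2 from rfl, show (7:ℕ)-3 = 4 from rfl, eL_two, eL_four, ell_seven]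
    · rw [show (8:ℕ)-5 = 3 from rfl, show (8:ℕ)-3 = 5 from rfl, eL_three, eL_five, ell_eight]
    · rw [show (9:ℕ)-5 = 4 from rfl, show (9:ℕ)-3 = 6 from rfl, eL_four, eL_six,
        ell_R (by norm_num), show (9:ℕ)-3 = 6 from rfl, ell_six]; omega
  · have h1 : eL (k-5) = 3 * eL (k-5-3) := eL_R (by omega)
    have h2 : eL (k-3) = 3 * eL (k-3-3) := eL_R (by omega)
    have h3 : ell k = 3 * ell (k-3) := ell_R (by omega)
    have hIH : 4 * eL (k-3-5) + eL (k-3-3) ≤ ell (k-3) := IH (k-3) (by omega) (by omega)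
    have e1 : k-5-3 = k-3-5 := by omega
    rw [h1, h2, h3, e1]
    omega

/-- numeric: two-component case with a singleton part -/
lemma numN4 : ∀ k, 3 ≤ k → 2 * eL (k-4) + eL (k-3) ≤ ell k := by
  intro k hk
  rcases Nat.lt_or_ge k 4 with h4 | h4
  · have h3 : k = 3 := by omega
    subst h3
    norm_num [eL_zero, ell_three]
  · calc 2 * eL (k-4) + eL (k-3) ≤ 2 * eL (k-2) := numN2 k h4
      _ ≤ ell k := two_eL (by omega)

/-- numeric: connected 2-regular one-component case -/
lemma numN3 {k : ℕ} (h : 3 ≤ k) : 2 * eL (k-3) + eL (k-3) ≤ ell k := by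
  have := three_eL h
  omega

section Coloring

variable {ι : Type*} [DecidableEq ι] (A : ι → ι → Prop)

/-- `I` is a nonempty independent subset of `t`. -/
def JGood (t I : Finset ι) : Prop :=
  I ⊆ t ∧ I.Nonempty ∧ ∀ i ∈ I, ∀ j ∈ I, ¬A i j

/-- two sets joined by an edge -/
def JJoined (I J : Finset ι) : Prop := ∃ i ∈ I, ∃ j ∈ J, A i j

/-- proper colorability of the join graph on independent subsets of `t` with `n` colors -/
def JColorable (t : Finset ι) (n : ℕ) : Prop :=
  ∃ f : Finset ι → ℕ, (∀ I, JGood A t I → f I < n) ∧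
    ∀ I J, JGood A t I → JGood A t J → JJoined A I J → f I ≠ f J

variable {A}

lemma jcolorable_mono {t : Finset ι} {n n' : ℕ} (h : n ≤ n') (hc : JColorable A t n) :
    JColorable A t n' := by
  obtain ⟨f, hb, hd⟩ := hc
  exact ⟨f, fun I hI => lt_of_lt_of_le (hb I hI) h, hd⟩

lemma jcolorable_of_no_edges {t : Finset ι} (h : ∀ i ∈ t, ∀ j ∈ t, ¬A i j) :
    JColorable A t 1 := by
  refine ⟨fun _ => 0, fun I hI => Nat.zero_lt_one, ?_⟩
  rintro I J hI hJ ⟨i, hi, j, hj, hA⟩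
  exact absurd hA (h i (hI.1 hi) j (hJ.1 hj))

/-- Splitting at a vertex `v`. -/
lemma jcolorable_split {t : Finset ι} {n c : ℕ} (v : ι) (hv : v ∈ t)
    (h1 : JColorable A (t.erase v) n)
    (h2 : JColorable A (t.filter (fun j => ¬(j = v ∨ A v j))) c) :
    JColorable A t (n + max 1 c) := by
  classical
  obtain ⟨f₁, hb₁, hd₁⟩ := h1
  obtain ⟨f₂, hb₂, hd₂⟩ := h2
  set tN := t.filter (fun j => ¬(j = v ∨ A v j)) with htN
  have hgoodE : ∀ K, JGood A t K → v ∈ K → (K.erase v).Nonempty → JGood A tN (K.erase v) := by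
    intro K hK hvK hne
    refine ⟨?_, hne, ?_⟩
    · intro j hj
      have hj' := Finset.mem_erase.1 hj
      refine Finset.mem_filter.2 ⟨hK.1 hj'.2, ?_⟩
      push_neg
      exact ⟨hj'.1, hK.2.2 v hvK j hj'.2⟩
    · intro i hi j hj
      exact hK.2.2 i (Finset.mem_of_mem_erase hi) j (Finset.mem_of_mem_erase hj)
  have hgoodD : ∀ K, JGood A t K → v ∉ K → JGood A (t.erase v) K := fun K hK hvK =>
    ⟨fun j hj => Finset.mem_erase.2 ⟨fun h => hvK (h ▸ hj), hK.1 hj⟩, hK.2.1, hK.2.2⟩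
  refine ⟨fun I => if v ∈ I then n + (if (I.erase v).Nonempty then f₂ (I.erase v) else 0)
    else f₁ I, ?_, ?_⟩
  · intro I hI
    by_cases hvI : v ∈ I
    · simp only [if_pos hvI]
      by_cases hne : (I.erase v).Nonempty
      · simp only [if_pos hne]
        have := hb₂ _ (hgoodE I hI hvI hne)
        have hc1 : c ≤ max 1 c := le_max_right _ _
        omega
      · simp only [if_neg hne]
        have : 1 ≤ max 1 c := le_max_left _ _
        omega
    · simp only [if_neg hvI]
      have := hb₁ _ (hgoodD I hI hvI)
      omega
  · rintro I J hI hJ ⟨i, hi, j, hj, hA⟩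
    by_cases hvI : v ∈ I <;> by_cases hvJ : v ∈ J
    · -- both contain v
      have hiv : i ≠ v := fun h => hJ.2.2 v hvJ j hj (h ▸ hA)
      have hjv : j ≠ v := fun h => hI.2.2 i hi v hvI (h ▸ hA)
      have hiE : i ∈ I.erase v := Finset.mem_erase.2 ⟨hiv, hi⟩
      have hjE : j ∈ J.erase v := Finset.mem_erase.2 ⟨hjv, hj⟩
      have hneI : (I.erase v).Nonempty := ⟨i, hiE⟩
      have hneJ : (J.erase v).Nonempty := ⟨j, hjE⟩
      simp only [if_pos hvI, if_pos hvJ, if_pos hneI, if_pos hneJ]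
      have := hd₂ _ _ (hgoodE I hI hvI hneI) (hgoodE J hJ hvJ hneJ) ⟨i, hiE, j, hjE, hA⟩
      omega
    · -- v ∈ I, v ∉ J
      simp only [if_pos hvI, if_neg hvJ]
      have := hb₁ _ (hgoodD J hJ hvJ)
      omega
    · simp only [if_neg hvI, if_pos hvJ]
      have := hb₁ _ (hgoodD I hI hvI)
      omega
    · simp only [if_neg hvI, if_neg hvJ]
      exact hd₁ _ _ (hgoodD I hI hvI) (hgoodD J hJ hvJ) ⟨i, hi, j, hj, hA⟩

/-- digits helper -/
lemma digit_ne {a a' b b' M : ℕ} (hb : b < M) (hb' : b' < M)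
    (h : a ≠ a' ∨ b ≠ b') : a * M + b ≠ a' * M + b' := by
  have key : ∀ x y u v : ℕ, v < M → x < y → x * M + u ≠ y * M + v → True := fun _ _ _ _ _ _ _ => trivial
  clear key
  have hlt : ∀ x y u v : ℕ, u < M → x < y → x * M + u < y * M + v := by
    intro x y u v hu hxy
    calc x * M + u < x * M + M := by omega
      _ = (x + 1) * M := by ring
      _ ≤ y * M := Nat.mul_le_mul_right _ (by omega)
      _ ≤ y * M + v := Nat.le_add_right _ _
  intro he
  rcases lt_trichotomy a a' with hx | hx | hx
  · exact absurd he (Nat.ne_of_lt (hlt a a' b b' hb hx))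
  · subst hx
    have hb2 : b = b' := Nat.add_left_cancel he
    rcases h with h | h
    · exact h rfl
    · exact h hb2
  · exact absurd he.symm (Nat.ne_of_lt (hlt a' a b' b hb' hx))

/-- Product over a split with no cross edges. -/
lemma jcolorable_union (hsym : ∀ i j, A i j → A j i) {t₁ t₂ : Finset ι} {n₁ n₂ : ℕ}
    (hd : Disjoint t₁ t₂)
    (hcross : ∀ i ∈ t₁, ∀ j ∈ t₂, ¬A i j)
    (h1 : JColorable A t₁ n₁) (h2 : JColorable A t₂ n₂) :
    JColorable A (t₁ ∪ t₂) (max 1 n₁ * max 1 n₂) := by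
  classical
  obtain ⟨f₁, hb₁, hd₁⟩ := h1
  obtain ⟨f₂, hb₂, hd₂⟩ := h2
  set M₂ := max 1 n₂ with hM₂
  have hgood : ∀ K, JGood A (t₁ ∪ t₂) K → ∀ s, (K ∩ s).Nonempty → JGood A s (K ∩ s) := by
    intro K hK s hne
    refine ⟨Finset.inter_subset_right, hne, ?_⟩
    intro i hi j hj
    exact hK.2.2 i (Finset.mem_of_mem_inter_left hi) j (Finset.mem_of_mem_inter_left hj)
  refine ⟨fun I => (if (I ∩ t₁).Nonempty then f₁ (I ∩ t₁) else 0) * M₂ +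
    (if (I ∩ t₂).Nonempty then f₂ (I ∩ t₂) else 0), ?_, ?_⟩
  · intro I hI
    have ha : (if (I ∩ t₁).Nonempty then f₁ (I ∩ t₁) else 0) < max 1 n₁ := by
      by_cases h : (I ∩ t₁).Nonempty
      · simp only [if_pos h]
        exact lt_of_lt_of_le (hb₁ _ (hgood I hI t₁ h)) (le_max_right _ _)
      · simp only [if_neg h]
        exact lt_of_lt_of_le Nat.zero_lt_one (le_max_left _ _)
    have hb : (if (I ∩ t₂).Nonempty then f₂ (I ∩ t₂) else 0) < M₂ := by
      by_cases h : (I ∩ t₂).Nonempty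
      · simp only [if_pos h]
        exact lt_of_lt_of_le (hb₂ _ (hgood I hI t₂ h)) (le_max_right _ _)
      · simp only [if_neg h]
        exact lt_of_lt_of_le Nat.zero_lt_one (le_max_left _ _)
    calc (if (I ∩ t₁).Nonempty then f₁ (I ∩ t₁) else 0) * M₂ +
        (if (I ∩ t₂).Nonempty then f₂ (I ∩ t₂) else 0)
        < (if (I ∩ t₁).Nonempty then f₁ (I ∩ t₁) else 0) * M₂ + M₂ := by omega
      _ = ((if (I ∩ t₁).Nonempty then f₁ (I ∩ t₁) else 0) + 1) * M₂ := by ring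
      _ ≤ max 1 n₁ * M₂ := Nat.mul_le_mul_right _ (by omega)
  · rintro I J hI hJ ⟨i, hi, j, hj, hA⟩
    have hit : i ∈ t₁ ∪ t₂ := hI.1 hi
    have hjt : j ∈ t₁ ∪ t₂ := hJ.1 hj
    rcases Finset.mem_union.1 hit with hi1 | hi2
    · have hj1 : j ∈ t₁ := by
        rcases Finset.mem_union.1 hjt with h | h
        · exact h
        · exact absurd hA (hcross i hi1 j h)
      have hneI : (I ∩ t₁).Nonempty := ⟨i, Finset.mem_inter.2 ⟨hi, hi1⟩⟩
      have hneJ : (J ∩ t₁).Nonempty := ⟨j, Finset.mem_inter.2 ⟨hj, hj1⟩⟩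
      have hf : f₁ (I ∩ t₁) ≠ f₁ (J ∩ t₁) :=
        hd₁ _ _ (hgood I hI t₁ hneI) (hgood J hJ t₁ hneJ)
          ⟨i, Finset.mem_inter.2 ⟨hi, hi1⟩, j, Finset.mem_inter.2 ⟨hj, hj1⟩, hA⟩
      apply digit_ne
      · by_cases h : (I ∩ t₂).Nonempty
        · simp only [if_pos h]
          exact lt_of_lt_of_le (hb₂ _ (hgood I hI t₂ h)) (le_max_right _ _)
        · simp only [if_neg h]
          exact lt_of_lt_of_le Nat.zero_lt_one (le_max_left _ _)
      · by_cases h : (J ∩ t₂).Nonempty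
        · simp only [if_pos h]
          exact lt_of_lt_of_le (hb₂ _ (hgood J hJ t₂ h)) (le_max_right _ _)
        · simp only [if_neg h]
          exact lt_of_lt_of_le Nat.zero_lt_one (le_max_left _ _)
      · left
        simp only [if_pos hneI, if_pos hneJ]
        exact hf
    · have hj2 : j ∈ t₂ := by
        rcases Finset.mem_union.1 hjt with h | h
        · exact absurd (hsym i j hA) (hcross j h i hi2)
        · exact h
      have hneI : (I ∩ t₂).Nonempty := ⟨i, Finset.mem_inter.2 ⟨hi, hi2⟩⟩
      have hneJ : (J ∩ t₂).Nonempty := ⟨j, Finset.mem_inter.2 ⟨hj, hj2⟩⟩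
      have hf : f₂ (I ∩ t₂) ≠ f₂ (J ∩ t₂) :=
        hd₂ _ _ (hgood I hI t₂ hneI) (hgood J hJ t₂ hneJ)
          ⟨i, Finset.mem_inter.2 ⟨hi, hi2⟩, j, Finset.mem_inter.2 ⟨hj, hj2⟩, hA⟩
      apply digit_ne
      · by_cases h : (I ∩ t₂).Nonempty
        · simp only [if_pos h]
          exact lt_of_lt_of_le (hb₂ _ (hgood I hI t₂ h)) (le_max_right _ _)
        · simp only [if_neg h]
          exact lt_of_lt_of_le Nat.zero_lt_one (le_max_left _ _)
      · by_cases h : (J ∩ t₂).Nonempty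
        · simp only [if_pos h]
          exact lt_of_lt_of_le (hb₂ _ (hgood J hJ t₂ h)) (le_max_right _ _)
        · simp only [if_neg h]
          exact lt_of_lt_of_le Nat.zero_lt_one (le_max_left _ _)
      · right
        simp only [if_pos hneI, if_pos hneJ]
        exact hf

end Coloring

section Conn

variable {ι : Type*} [DecidableEq ι] {A : ι → ι → Prop}

/-- reachability within a vertex set -/
def ReachIn (A : ι → ι → Prop) (t : Finset ι) : ι → ι → Prop :=
  Relation.ReflTransGen (fun a b => a ∈ t ∧ b ∈ t ∧ A a b)

def ConnIn (A : ι → ι → Prop) (t : Finset ι) : Prop :=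
  ∀ x ∈ t, ∀ y ∈ t, ReachIn A t x y

lemma reachIn_symm (hsym : ∀ i j, A i j → A j i) {t : Finset ι} {x y : ι}
    (h : ReachIn A t x y) : ReachIn A t y x := by
  induction h with
  | refl => exact .refl
  | tail p e ih => exact Relation.ReflTransGen.head ⟨e.2.1, e.1, hsym _ _ e.2.2⟩ ih

lemma reachIn_mem_right {t : Finset ι} {x y : ι} (h : ReachIn A t x y) (hx : x ∈ t) : y ∈ t := by
  induction h with
  | refl => exact hx
  | tail _ e _ => exact e.2.1

/-- component closure: reach inside the filtered component -/
lemma reachIn_filter {t : Finset ι} {u x : ι} (h : ReachIn A t u x) :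
    ReachIn A (t.filter (fun z => ReachIn A t u z)) u x := by
  classical
  induction h with
  | refl => exact .refl
  | @tail b c p e ih =>
    exact Relation.ReflTransGen.tail ih
      ⟨Finset.mem_filter.2 ⟨e.1, p⟩, Finset.mem_filter.2 ⟨e.2.1, p.tail e⟩, e.2.2⟩

/-- every vertex reaching `v` reaches (avoiding `v`) one of `v`'s at most two neighbours -/
lemma reach_avoid (hsym : ∀ i j, A i j → A j i) {t : Finset ι} {v u w x : ι}
    (hnb : ∀ j ∈ t, A v j → j = u ∨ j = w)
    (h : ReachIn A t x v) (hx : x ≠ v) :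
    ReachIn A (t.erase v) x u ∨ ReachIn A (t.erase v) x w := by
  classical
  induction h using Relation.ReflTransGen.head_induction_on with
  | refl => exact absurd rfl hx
  | @head a c e p ih =>
    by_cases hc : c = v
    · subst hc
      rcases hnb a e.1 (hsym _ _ e.2.2) with rfl | rfl
      · exact Or.inl .refl
      · exact Or.inr .refl
    · have ha : a ∈ t.erase v := Finset.mem_erase.2 ⟨hx, e.1⟩
      have hc' : c ∈ t.erase v := Finset.mem_erase.2 ⟨hc, e.2.1⟩
      rcases ih hc with h' | h'
      · exact Or.inl (Relation.ReflTransGen.head ⟨ha, hc', e.2.2⟩ h')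
      · exact Or.inr (Relation.ReflTransGen.head ⟨ha, hc', e.2.2⟩ h')

/-- if nothing in `t` has an edge into `u`, paths ending at `u` are trivial -/
lemma reach_to_isolated {t : Finset ι} {u x : ι} (hne : ∀ j ∈ t, ¬ A j u)
    (h : ReachIn A t x u) : x = u := by
  rcases Relation.ReflTransGen.cases_tail h with h' | ⟨c, _, e⟩
  · exact h'.symm
  · exact absurd e.2.2 (hne c e.1)

/-- neighbours of `v` in `t` -/
noncomputable def nbr (A : ι → ι → Prop) (t : Finset ι) (v : ι) : Finset ι :=
  t.filter (fun j => A v j)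

lemma nbr_mono {t t' : Finset ι} (h : t' ⊆ t) (v : ι) : nbr A t' v ⊆ nbr A t v := by
  classical
  exact Finset.filter_subset_filter _ h

lemma card_filter_non_nbhd (hirr : ∀ i, ¬A i i) {t : Finset ι} {v : ι} (hv : v ∈ t) :
    (t.filter (fun j => ¬(j = v ∨ A v j))).card = t.card - 1 - (nbr A t v).card := by
  classical
  have hset : t.filter (fun j => ¬(j = v ∨ A v j)) = t \ insert v (nbr A t v) := by
    ext j
    constructor
    · intro hj
      have hj' := Finset.mem_filter.1 hj
      refine Finset.mem_sdiff.2 ⟨hj'.1, ?_⟩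
      intro hmem
      rcases Finset.mem_insert.1 hmem with rfl | hmem'
      · exact hj'.2 (Or.inl rfl)
      · exact hj'.2 (Or.inr (Finset.mem_filter.1 hmem').2)
    · intro hj
      obtain ⟨hjt, hnot⟩ := Finset.mem_sdiff.1 hj
      refine Finset.mem_filter.2 ⟨hjt, ?_⟩
      rintro (rfl | hA)
      · exact hnot (Finset.mem_insert_self _ _)
      · exact hnot (Finset.mem_insert.2 (Or.inr (Finset.mem_filter.2 ⟨hjt, hA⟩)))
  rw [hset, Finset.card_sdiff_of_subset]
  · rw [Finset.card_insert_of_notMem]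
    · omega
    · intro hmem
      exact hirr v (Finset.mem_filter.1 hmem).2
  · intro j hj
    rcases Finset.mem_insert.1 hj with rfl | hj'
    · exact hv
    · exact Finset.mem_filter.1 hj' |>.1

/-- a connected set with ≥ 2 elements has no isolated vertex -/
lemma exists_nbr_of_conn (hconn : ConnIn A t) {u x : ι} (hu : u ∈ t) (hx : x ∈ t)
    (hne : u ≠ x) : ∃ j ∈ t, A u j := by
  have h := hconn u hu x hx
  rcases Relation.ReflTransGen.cases_head h with h' | ⟨c, e, _⟩
  · exact absurd h' hne
  · exact ⟨c, e.2.1, e.2.2⟩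

end Conn

section Master

variable {ι : Type*} [DecidableEq ι] {A : ι → ι → Prop}

lemma jcolorable_card_le_one (hirr : ∀ i, ¬A i i) {t : Finset ι} (h : t.card ≤ 1) :
    JColorable A t 1 :=
  jcolorable_of_no_edges (fun i hi j hj hA => by
    have := Finset.card_le_one.1 h i hi j hj
    subst this
    exact hirr i hA)

lemma eq_singleton_of_card_le_one {s : Finset ι} {v : ι} (h : s.card ≤ 1) (hv : v ∈ s) :
    s = {v} :=
  Finset.eq_singleton_iff_unique_mem.2 ⟨hv, fun w hw => Finset.card_le_one.1 h w hw v hv⟩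

lemma mem_pair_of_card_le_two {s : Finset ι} {u w j : ι} (hu : u ∈ s) (hw : w ∈ s)
    (huw : u ≠ w) (hcard : s.card ≤ 2) (hj : j ∈ s) : j = u ∨ j = w := by
  by_contra hcon
  push_neg at hcon
  have hsub : insert j (insert u ({w} : Finset ι)) ⊆ s := by
    intro x hx
    rcases Finset.mem_insert.1 hx with rfl | hx'
    · exact hj
    · rcases Finset.mem_insert.1 hx' with rfl | hx''
      · exact hu
      · rw [Finset.mem_singleton.1 hx'']; exact hw
  have hc3 : (insert j (insert u ({w} : Finset ι))).card = 3 := by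
    rw [Finset.card_insert_of_notMem, Finset.card_insert_of_notMem, Finset.card_singleton]
    · simp [huw]
    · simp [hcon.1, hcon.2]
  have := Finset.card_le_card hsub
  omega

lemma jcolorable_pair (hirr : ∀ i, ¬A i i) {t : Finset ι} {x : ι} (hx : x ∈ t)
    (h2 : t.card = 2) : JColorable A t 2 := by
  classical
  obtain ⟨a, b, hab, hts⟩ := Finset.card_eq_two.1 h2
  -- the other element
  have hother : ∃ y, y ≠ x ∧ t = {x, y} := by
    subst hts
    rcases Finset.mem_insert.1 hx with rfl | hx'
    · exact ⟨b, fun h => hab h.symm, rfl⟩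
    · rw [Finset.mem_singleton.1 hx']
      exact ⟨a, fun h => hab h, by rw [Finset.pair_comm]⟩
  obtain ⟨y, hyx, hty⟩ := hother
  refine ⟨fun I => if x ∈ I then 0 else 1, fun I _ => by dsimp only; split <;> omega, ?_⟩
  rintro I J hI hJ ⟨i, hi, j, hj, hA⟩
  have hij : i ≠ j := fun h => hirr i (h ▸ hA)
  have hiT := hI.1 hi
  have hjT := hJ.1 hj
  by_cases hxI : x ∈ I <;> by_cases hxJ : x ∈ J
  · -- both contain x : contradiction
    exfalso
    rw [hty] at hiT hjT
    have hix : i = x ∨ i = y := by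
      rcases Finset.mem_insert.1 hiT with h | h
      · exact Or.inl h
      · exact Or.inr (Finset.mem_singleton.1 h)
    have hjx : j = x ∨ j = y := by
      rcases Finset.mem_insert.1 hjT with h | h
      · exact Or.inl h
      · exact Or.inr (Finset.mem_singleton.1 h)
    rcases hix with h1 | h1 <;> rcases hjx with h2 | h2
    · exact hij (h1.trans h2.symm)
    · rw [h1, h2] at hA
      exact hJ.2.2 x hxJ y (h2 ▸ hj) hA
    · rw [h1, h2] at hA
      exact hI.2.2 y (h1 ▸ hi) x hxI hA
    · rw [h1, h2] at hA
      exact hirr y hA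
  · simp [hxI, hxJ]
  · simp [hxI, hxJ]
  · -- neither contains x : contradiction
    exfalso
    rw [hty] at hiT hjT
    have hiy : i = y := by
      rcases Finset.mem_insert.1 hiT with rfl | hi' 
      · exact absurd hxI (by simpa using hi)
      · exact Finset.mem_singleton.1 hi'
    have hjy : j = y := by
      rcases Finset.mem_insert.1 hjT with rfl | hj'
      · exact absurd hxJ (by simpa using hj)
      · exact Finset.mem_singleton.1 hj'
    exact hij (hiy.trans hjy.symm)

lemma exists_disconn_split (hne : t.Nonempty) (hnc : ¬ ConnIn A t) :
    ∃ t₁ t₂ : Finset ι, t₁ ∪ t₂ = t ∧ Disjoint t₁ t₂ ∧ t₁.Nonempty ∧ t₂.Nonempty ∧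
      (∀ i ∈ t₁, ∀ j ∈ t₂, ¬ A i j) := by
  classical
  unfold ConnIn at hnc
  push_neg at hnc
  obtain ⟨x, hx, y, hy, hreach⟩ := hnc
  refine ⟨t.filter (fun z => ReachIn A t x z), t.filter (fun z => ¬ ReachIn A t x z),
    Finset.filter_union_filter_not_eq _ t, Finset.disjoint_filter_filter_not t t _,
    ⟨x, Finset.mem_filter.2 ⟨hx, .refl⟩⟩, ⟨y, Finset.mem_filter.2 ⟨hy, hreach⟩⟩, ?_⟩
  intro i hi j hj hA
  have hi' := Finset.mem_filter.1 hi
  have hj' := Finset.mem_filter.1 hj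
  exact hj'.2 (hi'.2.tail ⟨hi'.1, hj'.1, hA⟩)

end Master

section MasterThm

variable {ι : Type*} [DecidableEq ι] {A : ι → ι → Prop}

lemma mem_comp_self {t' : Finset ι} {u : ι} (hu : u ∈ t') :
    u ∈ t'.filter (fun z => ReachIn A t' u z) :=
  Finset.mem_filter.2 ⟨hu, .refl⟩

lemma conn_comp (hsym : ∀ i j, A i j → A j i) {t' : Finset ι} {u : ι} :
    ConnIn A (t'.filter (fun z => ReachIn A t' u z)) := by
  intro x hx y hy
  have hx' := (Finset.mem_filter.1 hx).2
  have hy' := (Finset.mem_filter.1 hy).2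
  exact (reachIn_symm hsym (reachIn_filter hx')).trans (reachIn_filter hy')

lemma nbr_sub_le_one {s t : Finset ι} {x v : ι} (hs : s ⊆ t.erase v)
    (hvx : v ∈ nbr A t x) (hd : (nbr A t x).card ≤ 2) : (nbr A s x).card ≤ 1 := by
  classical
  have hsub : nbr A s x ⊆ (nbr A t x).erase v := by
    intro j hj
    have hj' := Finset.mem_filter.1 hj
    have hjs := hs hj'.1
    exact Finset.mem_erase.2 ⟨(Finset.mem_erase.1 hjs).1,
      Finset.mem_filter.2 ⟨(Finset.mem_erase.1 hjs).2, hj'.2⟩⟩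
  have := Finset.card_le_card hsub
  rw [Finset.card_erase_of_mem hvx] at this
  omega

theorem master (hsym : ∀ i j, A i j → A j i) (hirr : ∀ i, ¬A i i) :
    ∀ k : ℕ, ∀ t : Finset ι, t.card = k →
      ((ConnIn A t ∧ (∀ x ∈ t, (nbr A t x).card ≤ 2) ∧
          (∃ u ∈ t, (nbr A t u).card ≤ 1) ∧ 2 ≤ k)
        → JColorable A t (2 * eL (k - 2)))
      ∧ JColorable A t (eL k) := by
  intro k
  induction k using Nat.strong_induction_on with
  | _ k IH =>
  intro t ht
  -- ====== the Q (path-like) statement ======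
  have hQ : (ConnIn A t ∧ (∀ x ∈ t, (nbr A t x).card ≤ 2) ∧
      (∃ u ∈ t, (nbr A t u).card ≤ 1) ∧ 2 ≤ k) → JColorable A t (2 * eL (k - 2)) := by
    rintro ⟨hconn, hdeg, ⟨u, hu, hud⟩, hk2⟩
    rcases eq_or_lt_of_le hk2 with hk2' | hk3
    · -- k = 2
      have h2 : t.card = 2 := by omega
      have : (2:ℕ) = 2 * eL (k-2) := by
        rw [show k - 2 = 0 by omega, eL_zero]
      rw [← this]
      exact jcolorable_pair hirr hu h2
    · -- k ≥ 3
      -- u has exactly one neighbour v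
      obtain ⟨z, hz, hzu⟩ : ∃ z ∈ t, z ≠ u := by
        have h1 : 1 < t.card := by omega
        obtain ⟨z, hz, hzu⟩ := Finset.exists_mem_ne h1 u
        exact ⟨z, hz, hzu⟩
      obtain ⟨v, hvt, hAuv⟩ := exists_nbr_of_conn hconn hu hz (Ne.symm hzu)
      have hvnbr : v ∈ nbr A t u := Finset.mem_filter.2 ⟨hvt, hAuv⟩
      have hnbru : nbr A t u = {v} := eq_singleton_of_card_le_one hud hvnbr
      have hAvu : A v u := hsym _ _ hAuv
      have huv : u ≠ v := fun h => hirr u (h ▸ hAuv)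
      have hunbrv : u ∈ nbr A t v := Finset.mem_filter.2 ⟨hu, hAvu⟩
      have hdegv : (nbr A t v).card ≤ 2 := hdeg v hvt
      -- isolated-u fact on t.erase v
      have hIsoU : ∀ j ∈ t.erase v, ¬ A j u := by
        intro j hj hA
        have : j ∈ nbr A t u := Finset.mem_filter.2 ⟨(Finset.mem_erase.1 hj).2, hsym _ _ hA⟩
        rw [hnbru, Finset.mem_singleton] at this
        exact (Finset.mem_erase.1 hj).1 this
      by_cases hw : ∃ w ∈ nbr A t v, w ≠ u
      case neg =>
        -- deg v = 1 too: t = {u, v}, contradiction with k ≥ 3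
        exfalso
        push_neg at hw
        have hnbrv : nbr A t v = {u} := eq_singleton_of_card_le_one
          (by
            have : ∀ j ∈ nbr A t v, j = u := hw
            rcases le_or_gt (nbr A t v).card 1 with h | h
            · exact h
            · obtain ⟨j, hj, hju⟩ := Finset.exists_mem_ne h u
              exact absurd (hw j hj) hju) hunbrv
        have hsub : t.erase v ⊆ {u} := by
          intro x hx
          have hxv : x ≠ v := (Finset.mem_erase.1 hx).1
          have hr := hconn x ((Finset.mem_erase.1 hx).2) v hvt
          have hnb : ∀ j ∈ t, A v j → j = u ∨ j = u := by
            intro j hj hA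
            have : j ∈ nbr A t v := Finset.mem_filter.2 ⟨hj, hA⟩
            rw [hnbrv, Finset.mem_singleton] at this
            exact Or.inl this
          rcases reach_avoid hsym hnb hr hxv with h' | h' <;>
            · rw [Finset.mem_singleton]
              exact reach_to_isolated hIsoU h'
        have := Finset.card_le_card hsub
        rw [Finset.card_erase_of_mem hvt, Finset.card_singleton, ht] at this
        omega
      case pos =>
        obtain ⟨w, hwnbr, hwu⟩ := hw
        have hwt : w ∈ t := (Finset.mem_filter.1 hwnbr).1
        have hAvw : A v w := (Finset.mem_filter.1 hwnbr).2
        have hwv : w ≠ v := fun h => hirr v (h ▸ hAvw)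
        have hnb : ∀ j ∈ t, A v j → j = u ∨ j = w := fun j hj hA =>
          mem_pair_of_card_le_two hunbrv hwnbr (Ne.symm hwu) hdegv
            (Finset.mem_filter.2 ⟨hj, hA⟩)
        set t' := t.erase v with ht'
        have hut' : u ∈ t' := Finset.mem_erase.2 ⟨huv, hu⟩
        have hwt' : w ∈ t' := Finset.mem_erase.2 ⟨hwv, hwt⟩
        set C := t'.filter (fun z => ReachIn A t' w z) with hC
        have hwC : w ∈ C := mem_comp_self hwt'
        have huC : u ∉ C := by
          intro h
          exact hwu (reach_to_isolated (fun j hj => hIsoU j hj) (Finset.mem_filter.1 h).2)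
        have hCt' : C ⊆ t' := Finset.filter_subset _ _
        have hpart : t' = insert u C := by
          apply Finset.Subset.antisymm
          · intro x hx
            have hxv : x ≠ v := (Finset.mem_erase.1 hx).1
            have hr := hconn x ((Finset.mem_erase.1 hx).2) v hvt
            rcases reach_avoid hsym hnb hr hxv with h' | h'
            · rw [Finset.mem_insert]
              exact Or.inl (reach_to_isolated hIsoU h')
            · exact Finset.mem_insert.2 (Or.inr
                (Finset.mem_filter.2 ⟨hx, reachIn_symm hsym h'⟩))
          · intro x hx
            rcases Finset.mem_insert.1 hx with rfl | hx'
            · exact hut'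
            · exact hCt' hx'
        have hcardt' : t'.card = k - 1 := by
          rw [ht', Finset.card_erase_of_mem hvt, ht]
        have hcardC : C.card = k - 2 := by
          have : t'.card = C.card + 1 := by
            rw [hpart, Finset.card_insert_of_notMem huC]
          omega
        -- no edges between {u} and C
        have hcrossUC : ∀ i ∈ ({u} : Finset ι), ∀ j ∈ C, ¬ A i j := by
          intro i hi j hj hA
          rw [Finset.mem_singleton.1 hi] at hA
          exact hIsoU j (hCt' hj) (hsym _ _ hA)
        -- card of non-neighbourhood = k - 3
        have hcard2 : (nbr A t v).card = 2 := by
          have hsub2 : ({u, w} : Finset ι) ⊆ nbr A t v := by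
            intro x hx
            rcases Finset.mem_insert.1 hx with rfl | hx'
            · exact hunbrv
            · rw [Finset.mem_singleton.1 hx']; exact hwnbr
          have := Finset.card_le_card hsub2
          rw [Finset.card_insert_of_notMem (by simpa using Ne.symm hwu),
            Finset.card_singleton] at this
          omega
        have hcardN : (t.filter (fun j => ¬(j = v ∨ A v j))).card = k - 3 := by
          rw [card_filter_non_nbhd hirr hvt, ht, hcard2]
          omega
        have htN := (IH (k-3) (by omega) _ hcardN).2
        have hdpair : Disjoint ({u} : Finset ι) C := Finset.disjoint_singleton_left.2 huC
        have hpair_eq : ({u} : Finset ι) ∪ C = t' := by rw [← Finset.insert_eq, hpart]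
        rcases le_or_gt C.card 1 with hc1 | hc2
        · -- k = 3
          have hk3' : k = 3 := by omega
          have hCcol : JColorable A C 1 := jcolorable_card_le_one hirr hc1
          have ht'col : JColorable A t' 1 := by
            have := jcolorable_union hsym hdpair hcrossUC
              (jcolorable_card_le_one hirr (by simp)) hCcol
            rw [hpair_eq] at this
            simpa using this
          have hsplit := jcolorable_split v hvt ht'col htN
          refine jcolorable_mono ?_ hsplit
          subst hk3'
          norm_num [eL_zero, eL_one]
        · -- C has ≥ 2 elements, k ≥ 4
          have hdegC : ∀ x ∈ C, (nbr A C x).card ≤ 2 := by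
            intro x hx
            calc (nbr A C x).card ≤ (nbr A t x).card :=
                  Finset.card_le_card (nbr_mono (hCt'.trans (Finset.erase_subset _ _)) x)
              _ ≤ 2 := hdeg x (Finset.mem_of_mem_erase (hCt' hx))
          have hleafC : (nbr A C w).card ≤ 1 :=
            nbr_sub_le_one hCt' (Finset.mem_filter.2 ⟨hvt, hsym _ _ hAvw⟩) (hdeg w hwt)
          have hgoal := (IH (k-2) (by omega) C (by omega)).1
            ⟨conn_comp hsym, hdegC, ⟨w, hwC, hleafC⟩, by omega⟩
          have e1 : k - 2 - 2 = k - 4 := by omega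
          rw [e1] at hgoal
          have hCcol : JColorable A C (2 * eL (k-4)) := hgoal
          have ht'col : JColorable A t' (2 * eL (k-4)) := by
            have := jcolorable_union hsym hdpair hcrossUC
              (jcolorable_card_le_one hirr (by simp)) hCcol
            rw [hpair_eq] at this
            have hmax1 : max 1 (1:ℕ) = 1 := by norm_num
            have hmax2 : max 1 (2 * eL (k-4)) = 2 * eL (k-4) := by
              have := one_le_eL (k-4); omega
            rwa [hmax1, hmax2, Nat.one_mul] at this
          have hsplit := jcolorable_split v hvt ht'col htN
          refine jcolorable_mono ?_ hsplit
          have h1 : max 1 (eL (k-3)) = eL (k-3) := Nat.max_eq_right (one_le_eL _)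
          rw [h1]
          exact numN2 k (by omega)
  refine ⟨hQ, ?_⟩
  rcases Nat.eq_zero_or_pos k with hk0 | hk1
  · subst hk0
    have ht0 : t = ∅ := Finset.card_eq_zero.1 ht
    subst ht0
    exact jcolorable_mono (one_le_eL 0)
      (jcolorable_of_no_edges (fun i hi => absurd hi (Finset.notMem_empty i)))
  by_cases hconn : ConnIn A t
  case neg =>
    have hne : t.Nonempty := Finset.card_pos.1 (by omega)
    obtain ⟨t₁, t₂, hun, hdis, hne₁, hne₂, hcross⟩ := exists_disconn_split hne hconn
    have hcards : t₁.card + t₂.card = k := by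
      rw [← ht, ← hun, Finset.card_union_of_disjoint hdis]
    have h1 := (IH t₁.card (by have := hne₂.card_pos; omega) t₁ rfl).2
    have h2 := (IH t₂.card (by have := hne₁.card_pos; omega) t₂ rfl).2
    have hu := jcolorable_union hsym hdis hcross h1 h2
    rw [hun] at hu
    refine jcolorable_mono ?_ hu
    rw [Nat.max_eq_right (one_le_eL _), Nat.max_eq_right (one_le_eL _)]
    calc eL t₁.card * eL t₂.card ≤ eL (t₁.card + t₂.card) := eL_mul_le _ _
      _ = eL k := by rw [hcards]
  case pos =>
  by_cases hbig : ∃ v ∈ t, 3 ≤ (nbr A t v).card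
  case pos =>
    obtain ⟨v, hvt, hdv⟩ := hbig
    have hsubk : insert v (nbr A t v) ⊆ t := by
      intro x hx
      rcases Finset.mem_insert.1 hx with rfl | hx'
      · exact hvt
      · exact (Finset.mem_filter.1 hx').1
    have hk4 : 4 ≤ k := by
      have hvnot : v ∉ nbr A t v := fun h => hirr v (Finset.mem_filter.1 h).2
      have := Finset.card_le_card hsubk
      rw [Finset.card_insert_of_notMem hvnot, ht] at this
      omega
    have h1 := (IH (k-1) (by omega) (t.erase v)
      (by rw [Finset.card_erase_of_mem hvt, ht])).2
    have hcN : (t.filter (fun j => ¬(j = v ∨ A v j))).card = k - 1 - (nbr A t v).card := by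
      rw [card_filter_non_nbhd hirr hvt, ht]
    have h2 := (IH _ (by omega) _ hcN).2
    have h2' : JColorable A (t.filter (fun j => ¬(j = v ∨ A v j))) (eL (k-4)) :=
      jcolorable_mono (eL_mono (by omega)) h2
    have hsplit := jcolorable_split v hvt h1 h2'
    refine jcolorable_mono ?_ hsplit
    rw [Nat.max_eq_right (one_le_eL _), eL_of_pos (by omega : 1 ≤ k)]
    exact numN1 k hk4
  case neg =>
    push_neg at hbig
    have hdeg : ∀ x ∈ t, (nbr A t x).card ≤ 2 := fun x hx => by have := hbig x hx; omega
    by_cases hleaf : ∃ u ∈ t, (nbr A t u).card ≤ 1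
    case pos =>
      rcases Nat.lt_or_ge k 2 with hk1' | hk2
      · exact jcolorable_mono (one_le_eL k) (jcolorable_card_le_one hirr (by omega))
      · obtain ⟨u, hu, hud⟩ := hleaf
        refine jcolorable_mono ?_ (hQ ⟨hconn, hdeg, ⟨u, hu, hud⟩, hk2⟩)
        rw [eL_of_pos (by omega : 1 ≤ k)]
        exact two_eL hk2
    case neg =>
      push_neg at hleaf
      have hne : t.Nonempty := Finset.card_pos.1 (by omega)
      obtain ⟨v, hvt⟩ := hne
      have hdv2 : (nbr A t v).card = 2 := le_antisymm (hdeg v hvt) (hleaf v hvt)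
      obtain ⟨u, w, huw, hnbv⟩ := Finset.card_eq_two.1 hdv2
      have hunbr : u ∈ nbr A t v := by rw [hnbv]; exact Finset.mem_insert_self _ _
      have hwnbr : w ∈ nbr A t v := by rw [hnbv]; simp
      have hut : u ∈ t := (Finset.mem_filter.1 hunbr).1
      have hwt : w ∈ t := (Finset.mem_filter.1 hwnbr).1
      have hAvu : A v u := (Finset.mem_filter.1 hunbr).2
      have hAvw : A v w := (Finset.mem_filter.1 hwnbr).2
      have huv : u ≠ v := fun h => hirr v (h ▸ hAvu)
      have hwv : w ≠ v := fun h => hirr v (h ▸ hAvw)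
      have hnb : ∀ j ∈ t, A v j → j = u ∨ j = w := by
        intro j hj hA
        have hmem : j ∈ nbr A t v := Finset.mem_filter.2 ⟨hj, hA⟩
        rw [hnbv] at hmem
        rcases Finset.mem_insert.1 hmem with h | h
        · exact Or.inl h
        · exact Or.inr (Finset.mem_singleton.1 h)
      set t' := t.erase v with ht'def
      have hut' : u ∈ t' := Finset.mem_erase.2 ⟨huv, hut⟩
      have hwt' : w ∈ t' := Finset.mem_erase.2 ⟨hwv, hwt⟩
      have hct' : t'.card = k - 1 := by rw [ht'def, Finset.card_erase_of_mem hvt, ht]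
      have hk3 : 3 ≤ k := by
        have hsub2 : ({u, w} : Finset ι) ⊆ t' := by
          intro x hx
          rcases Finset.mem_insert.1 hx with rfl | hx'
          · exact hut'
          · rw [Finset.mem_singleton.1 hx']; exact hwt'
        have := Finset.card_le_card hsub2
        rw [Finset.card_insert_of_notMem (by simpa using huw), Finset.card_singleton,
          hct'] at this
        omega
      have hreach : ∀ x ∈ t', ReachIn A t' x u ∨ ReachIn A t' x w := fun x hx =>
        reach_avoid hsym hnb (hconn x (Finset.mem_of_mem_erase hx) v hvt)
          (Finset.mem_erase.1 hx).1
      have hcardN : (t.filter (fun j => ¬(j = v ∨ A v j))).card = k - 3 := by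
        rw [card_filter_non_nbhd hirr hvt, ht, hdv2]
        omega
      have htN := (IH (k-3) (by omega) _ hcardN).2
      have hdegsub : ∀ s : Finset ι, s ⊆ t' → ∀ x ∈ s, (nbr A s x).card ≤ 2 := by
        intro s hs x hx
        calc (nbr A s x).card ≤ (nbr A t x).card :=
              Finset.card_le_card (nbr_mono (hs.trans (Finset.erase_subset _ _)) x)
          _ ≤ 2 := hdeg x (Finset.mem_of_mem_erase (hs hx))
      have hleafu : ∀ s : Finset ι, s ⊆ t' → (nbr A s u).card ≤ 1 := fun s hs =>
        nbr_sub_le_one hs (Finset.mem_filter.2 ⟨hvt, hsym _ _ hAvu⟩) (hdeg u hut)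
      have hleafw : ∀ s : Finset ι, s ⊆ t' → (nbr A s w).card ≤ 1 := fun s hs =>
        nbr_sub_le_one hs (Finset.mem_filter.2 ⟨hvt, hsym _ _ hAvw⟩) (hdeg w hwt)
      set Cu := t'.filter (fun z => ReachIn A t' u z) with hCudef
      set Cw := t'.filter (fun z => ReachIn A t' w z) with hCwdef
      have huCu : u ∈ Cu := mem_comp_self hut'
      have hwCw : w ∈ Cw := mem_comp_self hwt'
      have hCut' : Cu ⊆ t' := Finset.filter_subset _ _
      have hCwt' : Cw ⊆ t' := Finset.filter_subset _ _
      by_cases hwCu : w ∈ Cu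
      case pos =>
        have huw' : ReachIn A t' u w := (Finset.mem_filter.1 hwCu).2
        have hreachu : ∀ x ∈ t', ReachIn A t' x u := by
          intro x hx
          rcases hreach x hx with h | h
          · exact h
          · exact h.trans (reachIn_symm hsym huw')
        have hconn' : ConnIn A t' := fun x hx y hy =>
          (hreachu x hx).trans (reachIn_symm hsym (hreachu y hy))
        have hQ' := (IH (k-1) (by omega) t' hct').1
          ⟨hconn', hdegsub t' (Finset.Subset.refl t'),
            ⟨u, hut', hleafu t' (Finset.Subset.refl t')⟩, by omega⟩
        have e : k - 1 - 2 = k - 3 := by omega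
        rw [e] at hQ'
        have hsplit := jcolorable_split v hvt hQ' htN
        refine jcolorable_mono ?_ hsplit
        rw [Nat.max_eq_right (one_le_eL _), eL_of_pos (by omega : 1 ≤ k)]
        exact numN3 hk3
      case neg =>
        have hdisjC : Disjoint Cu Cw := by
          rw [Finset.disjoint_left]
          intro x hxu hxw
          exact hwCu (Finset.mem_filter.2 ⟨hwt',
            ((Finset.mem_filter.1 hxu).2.trans
              (reachIn_symm hsym (Finset.mem_filter.1 hxw).2))⟩)
        have hcover : Cu ∪ Cw = t' := by
          apply Finset.Subset.antisymm
          · intro x hx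
            rcases Finset.mem_union.1 hx with h | h
            · exact hCut' h
            · exact hCwt' h
          · intro x hx
            rcases hreach x hx with h | h
            · exact Finset.mem_union_left _
                (Finset.mem_filter.2 ⟨hx, reachIn_symm hsym h⟩)
            · exact Finset.mem_union_right _
                (Finset.mem_filter.2 ⟨hx, reachIn_symm hsym h⟩)
        have hcrossC : ∀ i ∈ Cu, ∀ j ∈ Cw, ¬ A i j := by
          intro i hi j hj hA
          have hiu := (Finset.mem_filter.1 hi).2
          have hj' : j ∈ Cu := Finset.mem_filter.2 ⟨(Finset.mem_filter.1 hj).1,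
            hiu.tail ⟨(Finset.mem_filter.1 hi).1, (Finset.mem_filter.1 hj).1, hA⟩⟩
          exact absurd hj (Finset.disjoint_left.1 hdisjC hj')
        have hcardsum : Cu.card + Cw.card = k - 1 := by
          rw [← Finset.card_union_of_disjoint hdisjC, hcover, hct']
        have hcomp : ∀ s : Finset ι, s ⊆ t' → ∀ z, z ∈ s → ConnIn A s →
            (nbr A s z).card ≤ 1 → 2 ≤ s.card → JColorable A s (2 * eL (s.card - 2)) := by
          intro s hs z hz hcs hlz h2
          have hslt : s.card < k := by
            have := Finset.card_le_card hs
            omega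
          exact (IH s.card hslt s rfl).1 ⟨hcs, hdegsub s hs, ⟨z, hz, hlz⟩, h2⟩
        have hCuPos : 1 ≤ Cu.card := Finset.card_pos.2 ⟨u, huCu⟩
        have hCwPos : 1 ≤ Cw.card := Finset.card_pos.2 ⟨w, hwCw⟩
        have hmaxN : max 1 (eL (k-3)) = eL (k-3) := Nat.max_eq_right (one_le_eL _)
        rcases le_or_gt Cu.card 1 with ha1 | ha2 <;> rcases le_or_gt Cw.card 1 with hb1 | hb2
        · -- both singletons : k = 3
          have hk3' : k = 3 := by omega
          have hu1 := jcolorable_card_le_one hirr (A := A) ha1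
          have hw1 := jcolorable_card_le_one hirr (A := A) hb1
          have hun := jcolorable_union hsym hdisjC hcrossC hu1 hw1
          rw [hcover] at hun
          have hun' : JColorable A t' 1 := by simpa using hun
          have hsplit := jcolorable_split v hvt hun' htN
          refine jcolorable_mono ?_ hsplit
          subst hk3'
          rw [show (3:ℕ)-3 = 0 from rfl, eL_zero, eL_three]
          norm_num
        · -- Cu singleton, Cw big : Cw.card = k - 2
          have hb : Cw.card = k - 2 := by omega
          have hu1 := jcolorable_card_le_one hirr (A := A) ha1
          have hwcol := hcomp Cw hCwt' w hwCw (conn_comp hsym) (hleafw Cw hCwt') (by omega)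
          have hun := jcolorable_union hsym hdisjC hcrossC hu1 hwcol
          rw [hcover] at hun
          have hun' : JColorable A t' (2 * eL (k-4)) := by
            have hm1 : max 1 (1:ℕ) = 1 := by norm_num
            have hm2 : max 1 (2 * eL (Cw.card - 2)) = 2 * eL (Cw.card - 2) := by
              have := one_le_eL (Cw.card - 2); omega
            rw [hm1, hm2, Nat.one_mul] at hun
            have e : Cw.card - 2 = k - 4 := by omega
            rwa [e] at hun
          have hsplit := jcolorable_split v hvt hun' htN
          refine jcolorable_mono ?_ hsplit
          rw [hmaxN, eL_of_pos (by omega : 1 ≤ k)]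
          exact numN4 k hk3
        · -- Cw singleton, Cu big
          have hb : Cu.card = k - 2 := by omega
          have hw1 := jcolorable_card_le_one hirr (A := A) hb1
          have hucol := hcomp Cu hCut' u huCu (conn_comp hsym) (hleafu Cu hCut') (by omega)
          have hun := jcolorable_union hsym hdisjC hcrossC hucol hw1
          rw [hcover] at hun
          have hun' : JColorable A t' (2 * eL (k-4)) := by
            have hm1 : max 1 (1:ℕ) = 1 := by norm_num
            have hm2 : max 1 (2 * eL (Cu.card - 2)) = 2 * eL (Cu.card - 2) := by
              have := one_le_eL (Cu.card - 2); omega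
            rw [hm1, hm2, Nat.mul_one] at hun
            have e : Cu.card - 2 = k - 4 := by omega
            rwa [e] at hun
          have hsplit := jcolorable_split v hvt hun' htN
          refine jcolorable_mono ?_ hsplit
          rw [hmaxN, eL_of_pos (by omega : 1 ≤ k)]
          exact numN4 k hk3
        · -- both big : k ≥ 5
          have hk5 : 5 ≤ k := by omega
          have hucol := hcomp Cu hCut' u huCu (conn_comp hsym) (hleafu Cu hCut') (by omega)
          have hwcol := hcomp Cw hCwt' w hwCw (conn_comp hsym) (hleafw Cw hCwt') (by omega)
          have hun := jcolorable_union hsym hdisjC hcrossC hucol hwcol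
          rw [hcover] at hun
          have hun' : JColorable A t' (4 * eL (k-5)) := by
            have hm1 : max 1 (2 * eL (Cu.card - 2)) = 2 * eL (Cu.card - 2) := by
              have := one_le_eL (Cu.card - 2); omega
            have hm2 : max 1 (2 * eL (Cw.card - 2)) = 2 * eL (Cw.card - 2) := by
              have := one_le_eL (Cw.card - 2); omega
            rw [hm1, hm2] at hun
            refine jcolorable_mono ?_ hun
            have hprod : eL (Cu.card - 2) * eL (Cw.card - 2) ≤ eL (k-5) := by
              calc eL (Cu.card - 2) * eL (Cw.card - 2)
                  ≤ eL ((Cu.card - 2) + (Cw.card - 2)) := eL_mul_le _ _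
                _ = eL (k-5) := by congr 1; omega
            calc 2 * eL (Cu.card - 2) * (2 * eL (Cw.card - 2))
                = 4 * (eL (Cu.card - 2) * eL (Cw.card - 2)) := by ring
              _ ≤ 4 * eL (k-5) := by omega
          have hsplit := jcolorable_split v hvt hun' htN
          refine jcolorable_mono ?_ hsplit
          rw [hmaxN, eL_of_pos (by omega : 1 ≤ k)]
          exact numN5 k hk5

end MasterThm

lemma ell_strict_mono {a b : ℕ} (ha : 1 ≤ a) (hab : a < b) : ell a < ell b :=
  lt_of_lt_of_le (ell_strict ha) (ell_mono (by omega) (by omega))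

/-- Lower bound: a separating cover with `k` sets on `m` points forces `m ≤ eL k`. -/
theorem sep_lower {m k : ℕ} (F : Fin k → Set (Fin m)) (h : IsSepCover F) : m ≤ eL k := by
  classical
  set A : Fin k → Fin k → Prop := fun i j => i ≠ j ∧ Disjoint (F i) (F j) with hA
  have hsym : ∀ i j, A i j → A j i := fun i j ⟨h1, h2⟩ => ⟨h1.symm, h2.symm⟩
  have hirr : ∀ i, ¬A i i := fun i hc => hc.1 rfl
  have hcard : (Finset.univ : Finset (Fin k)).card = k := by simp
  obtain ⟨f, hb, hd⟩ := (master hsym hirr k Finset.univ hcard).2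
  set c : Fin m → Finset (Fin k) := fun x => Finset.univ.filter (fun i => x ∈ F i) with hc
  have hgood : ∀ x, JGood A Finset.univ (c x) := by
    intro x
    refine ⟨Finset.subset_univ _, ?_, ?_⟩
    · obtain ⟨i, hi⟩ := h.1 x
      exact ⟨i, Finset.mem_filter.2 ⟨Finset.mem_univ i, hi⟩⟩
    · intro i hi j hj hAij
      have hxi : x ∈ F i := (Finset.mem_filter.1 hi).2
      have hxj : x ∈ F j := (Finset.mem_filter.1 hj).2
      exact Set.disjoint_left.1 hAij.2 hxi hxj
  have hinj : Function.Injective (fun x : Fin m => (⟨f (c x), hb _ (hgood x)⟩ : Fin (eL k))) := by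
    intro x y hxy
    by_contra hne
    obtain ⟨i, j, hxi, hyj, hdisj⟩ := h.2 x y hne
    have hij : i ≠ j := by
      rintro rfl
      exact Set.disjoint_left.1 hdisj hxi hxi
    have hJ : JJoined A (c x) (c y) :=
      ⟨i, Finset.mem_filter.2 ⟨Finset.mem_univ i, hxi⟩,
       j, Finset.mem_filter.2 ⟨Finset.mem_univ j, hyj⟩, hij, hdisj⟩
    exact hd (c x) (c y) (hgood x) (hgood y) hJ (by simpa using hxy)
  have := Fintype.card_le_of_injective _ hinj
  simpa using this

lemma isSepCover_congr {m m' k k' : ℕ} (hm : m = m') (hk : k = k')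
    (h : ∃ F : Fin k → Set (Fin m), IsSepCover F) :
    ∃ F : Fin k' → Set (Fin m'), IsSepCover F := by
  subst hm hk
  exact h

/-- Upper bound construction from a list of parts. -/
theorem sep_of_list : ∀ l : List ℕ, l ≠ [] → (∀ a ∈ l, 0 < a) →
    ∃ F : Fin l.sum → Set (Fin l.prod), IsSepCover F := by
  intro l
  induction l with
  | nil => intro h; exact absurd rfl h
  | cons a tl IH =>
    intro _ hpos
    rcases tl with _ | ⟨b, tl'⟩
    · -- base case : single part
      refine isSepCover_congr (by simp) (by simp) (m := a) (k := a) ?_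
      refine ⟨fun i => {x | (x : ℕ) = (i : ℕ)}, ?_, ?_⟩
      · intro x; exact ⟨x, rfl⟩
      · intro x y hxy
        refine ⟨x, y, rfl, rfl, ?_⟩
        rw [Set.disjoint_left]
        intro z hz1 hz2
        exact hxy (Fin.ext ((Eq.symm hz1).trans hz2))
    · -- cons case
      set t := b :: tl' with htdef
      obtain ⟨G, hG⟩ := IH (by simp [htdef]) (fun x hx => hpos x (List.mem_cons_of_mem a hx))
      refine isSepCover_congr (m := a * t.prod) (k := a + t.sum) (by simp) (by simp) ?_
      set e := finProdFinEquiv (m := a) (n := t.prod) with hedef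
      refine ⟨Fin.addCases (fun i₁ => {x | (e.symm x).1 = i₁})
        (fun i₂ => {x | (e.symm x).2 ∈ G i₂}), ?_, ?_⟩
      · intro x
        refine ⟨Fin.castAdd t.sum (e.symm x).1, ?_⟩
        simp only [Fin.addCases_left]
        exact rfl
      · intro x y hxy
        have hesymm : e.symm x ≠ e.symm y := fun h => hxy (e.symm.injective h)
        by_cases h1 : (e.symm x).1 = (e.symm y).1
        · -- second coordinates differ
          have h2 : (e.symm x).2 ≠ (e.symm y).2 := by
            intro h2
            exact hesymm (Prod.ext h1 h2)
          obtain ⟨i', j', hxi, hyj, hdisj⟩ := hG.2 _ _ h2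
          refine ⟨Fin.natAdd a i', Fin.natAdd a j', ?_, ?_, ?_⟩
          · simp only [Fin.addCases_right]
            exact hxi
          · simp only [Fin.addCases_right]
            exact hyj
          · simp only [Fin.addCases_right]
            rw [Set.disjoint_left]
            intro z hz1 hz2
            exact Set.disjoint_left.1 hdisj hz1 hz2
        · -- first coordinates differ
          refine ⟨Fin.castAdd t.sum (e.symm x).1, Fin.castAdd t.sum (e.symm y).1, ?_, ?_, ?_⟩
          · simp only [Fin.addCases_left]
            exact rfl
          · simp only [Fin.addCases_left]
            exact rfl
          · simp only [Fin.addCases_left]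
            rw [Set.disjoint_left]
            intro z hz1 hz2
            rw [Set.mem_setOf_eq] at hz1 hz2
            exact h1 ((Eq.symm hz1).trans hz2)

theorem sepNum_ell : ∀ n : ℕ, 1 ≤ n → sepNum (ell n) = n := by
  intro n hn
  have hmem : n ∈ {k | ∃ F : Fin k → Set (Fin (ell n)), IsSepCover F} := by
    obtain ⟨l, hne, hpos, hs, hp⟩ := ell_mem hn
    exact isSepCover_congr hp hs (sep_of_list l hne hpos)
  have hlb : ∀ k ∈ {k | ∃ F : Fin k → Set (Fin (ell n)), IsSepCover F}, n ≤ k := by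
    rintro k ⟨F, hF⟩
    rcases Nat.eq_zero_or_pos k with rfl | hk1
    · -- no sets can't cover a nonempty ground set
      exfalso
      have hpos : 0 < ell n := ell_pos hn
      obtain ⟨i, -⟩ := hF.1 ⟨0, hpos⟩
      exact Fin.elim0 i
    · have hle := sep_lower F hF
      rw [eL_of_pos hk1] at hle
      by_contra hlt
      push_neg at hlt
      exact absurd hle (not_le.2 (ell_strict_mono hk1 hlt))
  exact le_antisymm (Nat.sInf_le hmem) (le_csInf ⟨n, hmem⟩ hlb)
end

section
/- For every positive integer n there exists a finite simple graph on n vertices with at least ℓ(n) maximal independent sets; hence g(n) ≥ ℓ(n). -/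
/-- `I` is a maximal independent set (MIS) of `G`: it is independent, and it is not
properly contained in any other independent set. -/
def IsMaxIndepSet {V : Type*} (G : SimpleGraph V) (I : Set V) : Prop :=
  (∀ x ∈ I, ∀ y ∈ I, ¬ G.Adj x y) ∧
  ∀ J : Set V, (∀ x ∈ J, ∀ y ∈ J, ¬ G.Adj x y) → I ⊆ J → J = I

/-- The number of maximal independent sets of `G`. -/
noncomputable def misCount {V : Type*} (G : SimpleGraph V) : ℕ :=
  Nat.card {I : Set V // IsMaxIndepSet G I}

/-- `maxMis n` is the maximum number of maximal independent sets among all simple graphs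
on `n` vertices. -/
noncomputable def maxMis (n : ℕ) : ℕ := sSup {k | ∃ G : SimpleGraph (Fin n), misCount G = k}

/-- Characterization of MISes of a disjoint union of cliques (fibers of `f`). -/
lemma mis_char {V ι : Type*} (f : V → ι) (hf : Function.Surjective f)
    (G : SimpleGraph V) (hG : ∀ x y, G.Adj x y ↔ f x = f y ∧ x ≠ y) (I : Set V) :
    IsMaxIndepSet G I ↔ ∀ i, ∃! x, x ∈ I ∧ f x = i := by
  constructor
  · rintro ⟨hind, hmax⟩ i
    by_cases hex : ∃ x ∈ I, f x = i
    · obtain ⟨x, hxI, hxf⟩ := hex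
      refine ⟨x, ⟨hxI, hxf⟩, ?_⟩
      rintro y ⟨hyI, hyf⟩
      by_contra hne
      exact hind y hyI x hxI ((hG y x).mpr ⟨hyf.trans hxf.symm, hne⟩)
    · obtain ⟨v, hv⟩ := hf i
      exfalso
      have hvI : v ∉ I := fun h => hex ⟨v, h, hv⟩
      have hJ : ∀ x ∈ I ∪ {v}, ∀ y ∈ I ∪ {v}, ¬ G.Adj x y := by
        rintro x (hx | hx) y (hy | hy) hadj
        · exact hind x hx y hy hadj
        · rcases (hG x y).mp hadj with ⟨hfe, _⟩
          rw [Set.mem_singleton_iff] at hy; subst hy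
          exact hex ⟨x, hx, hfe.trans hv⟩
        · rcases (hG x y).mp hadj with ⟨hfe, _⟩
          rw [Set.mem_singleton_iff] at hx; subst hx
          exact hex ⟨y, hy, hfe.symm.trans hv⟩
        · rw [Set.mem_singleton_iff] at hx hy; subst hx; subst hy
          exact ((hG y y).mp hadj).2 rfl
      have := hmax (I ∪ {v}) hJ Set.subset_union_left
      exact hvI (this ▸ Set.mem_union_right I rfl)
  · intro h
    constructor
    · intro x hx y hy hadj
      rcases (hG x y).mp hadj with ⟨hfe, hne⟩
      obtain ⟨z, _, hz⟩ := h (f x)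
      exact hne ((hz x ⟨hx, rfl⟩).trans (hz y ⟨hy, hfe.symm⟩).symm)
    · intro J hJ hIJ
      apply Set.Subset.antisymm _ hIJ
      intro v hv
      obtain ⟨x, ⟨hxI, hxf⟩, _⟩ := h (f v)
      by_cases hxv : x = v
      · exact hxv ▸ hxI
      · exact absurd ((hG x v).mpr ⟨hxf, hxv⟩) (hJ x (hIJ hxI) v hv)

lemma sigma_eta {k : ℕ} {a : Fin k → ℕ} (s : Σ i, Fin (a i)) {i : Fin k} (h : s.1 = i) :
    (⟨i, h ▸ s.2⟩ : Σ i, Fin (a i)) = s := by cases s; subst h; rfl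

/-- A disjoint union of cliques of sizes `a i` has exactly `∏ i, a i` MISes. -/
lemma count_lemma {n k : ℕ} (a : Fin k → ℕ) (ha : ∀ i, 0 < a i)
    (e : (Σ i, Fin (a i)) ≃ Fin n) :
    ∃ G : SimpleGraph (Fin n), misCount G = ∏ i, a i := by
  set f : Fin n → Fin k := fun u => (e.symm u).1 with hfdef
  have hf : Function.Surjective f := by
    intro i
    exact ⟨e ⟨i, ⟨0, ha i⟩⟩, by simp [hfdef]⟩
  set G : SimpleGraph (Fin n) :=
    ⟨fun u v => f u = f v ∧ u ≠ v, ⟨by rintro u v ⟨h1, h2⟩; exact ⟨h1.symm, h2.symm⟩⟩,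
      ⟨by rintro u ⟨_, h⟩; exact h rfl⟩⟩ with hGdef
  have hG : ∀ x y, G.Adj x y ↔ f x = f y ∧ x ≠ y := fun x y => Iff.rfl
  have hchar := mis_char f hf G hG
  refine ⟨G, ?_⟩
  set F : (∀ i, Fin (a i)) → Set (Fin n) :=
    fun g => Set.range (fun i => e ⟨i, g i⟩) with hFdef
  have hfF : ∀ (g : ∀ i, Fin (a i)) (i : Fin k), f (e ⟨i, g i⟩) = i := by
    intro g i; simp [hfdef]
  have hFmis : ∀ g, IsMaxIndepSet G (F g) := by
    intro g
    rw [hchar]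
    intro i
    refine ⟨e ⟨i, g i⟩, ⟨⟨i, rfl⟩, hfF g i⟩, ?_⟩
    rintro y ⟨⟨j, rfl⟩, hyf⟩
    rw [hfF g j] at hyf; subst hyf; rfl
  have hFinj : Function.Injective F := by
    intro g g' h
    funext i
    have : e ⟨i, g i⟩ ∈ F g' := h ▸ ⟨i, rfl⟩
    obtain ⟨j, hj⟩ := this
    obtain ⟨h1, h2⟩ := Sigma.mk.inj_iff.mp (e.injective hj)
    subst h1
    exact (eq_of_heq h2).symm
  have hFsurj : ∀ I : Set (Fin n), IsMaxIndepSet G I → ∃ g, F g = I := by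
    intro I hI
    rw [hchar] at hI
    choose x hx hu using hI
    have hxI : ∀ i, x i ∈ I := fun i => (hx i).1
    have hxf : ∀ i, (e.symm (x i)).1 = i := fun i => (hx i).2
    refine ⟨fun i => (hxf i) ▸ (e.symm (x i)).2, ?_⟩
    have key : ∀ i, e ⟨i, (hxf i) ▸ (e.symm (x i)).2⟩ = x i := by
      intro i
      rw [sigma_eta (e.symm (x i)) (hxf i)]
      exact e.apply_symm_apply (x i)
    apply Set.Subset.antisymm
    · rintro v ⟨i, rfl⟩
      simpa only [key i] using hxI i
    · intro v hv
      have hvx : v = x (f v) := hu (f v) v ⟨hv, rfl⟩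
      exact ⟨f v, (key (f v)).trans hvx.symm⟩
  have hbij : Function.Bijective
      (fun g => (⟨F g, hFmis g⟩ : {I : Set (Fin n) // IsMaxIndepSet G I})) := by
    constructor
    · intro g g' h
      exact hFinj (congrArg Subtype.val h)
    · rintro ⟨I, hI⟩
      obtain ⟨g, hg⟩ := hFsurj I hI
      exact ⟨g, Subtype.ext hg⟩
  rw [misCount, ← Nat.card_eq_of_bijective _ hbij]
  simp [Nat.card_pi]

lemma list_prod_le_two_pow_sum (l : List ℕ) : l.prod ≤ 2 ^ l.sum := by
  induction l with
  | nil => simp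
  | cons a l ih =>
    simp only [List.prod_cons, List.sum_cons, pow_add]
    exact Nat.mul_le_mul (Nat.lt_two_pow_self (n := a)).le ih

/-- For every `n ≥ 1` there is a graph on `n` vertices with at least `ell n` maximal
independent sets; hence `maxMis n ≥ ell n`. -/
theorem exists_graph_ell_le_misCount :
    ∀ n : ℕ, 1 ≤ n → (∃ G : SimpleGraph (Fin n), ell n ≤ misCount G) ∧ ell n ≤ maxMis n := by
  intro n hn
  have hne : {m | ProdOfSum n m}.Nonempty :=
    ⟨n, [n], by simp, by simpa using Nat.pos_of_ne_zero (by omega : n ≠ 0), by simp, by simp⟩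
  have hbdd : BddAbove {m | ProdOfSum n m} := by
    refine ⟨2 ^ n, ?_⟩
    rintro m ⟨l, -, -, hs, hp⟩
    rw [← hp, ← hs]
    exact list_prod_le_two_pow_sum l
  have hmem : ell n ∈ {m | ProdOfSum n m} := Nat.sSup_mem hne hbdd
  obtain ⟨l, hl0, hlpos, hlsum, hlprod⟩ := hmem
  set a : Fin l.length → ℕ := fun i => l.get i with hadef
  have ha : ∀ i, 0 < a i := fun i => hlpos _ (l.get_mem i)
  have hcard : Fintype.card (Σ i, Fin (a i)) = n := by
    simp only [Fintype.card_sigma, Fintype.card_fin, hadef]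
    simpa [List.get_eq_getElem] using (Fin.sum_univ_getElem l).trans hlsum
  have hprod : ∏ i, a i = ell n := by
    simp only [hadef]
    simpa [List.get_eq_getElem] using (Fin.prod_univ_getElem l).trans hlprod
  obtain ⟨G, hG⟩ := count_lemma a ha (Fintype.equivFinOfCardEq hcard)
  have hGe : ell n ≤ misCount G := (hG.trans hprod).ge
  refine ⟨⟨G, hGe⟩, ?_⟩
  have hTb : BddAbove {k | ∃ G : SimpleGraph (Fin n), misCount G = k} := by
    refine ⟨Nat.card (Set (Fin n)), ?_⟩
    rintro m ⟨G', rfl⟩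
    exact Nat.card_le_card_of_injective _ Subtype.val_injective
  exact hGe.trans (le_csSup hTb ⟨G, rfl⟩)
end

section
/- For any finite simple graph G and any vertex v of G, m(G) ≤ m(G − v) + m(G − N[v]), where G − X denotes the graph obtained from G by deleting the vertices of X and all edges incident to them, and N[v] is the closed neighborhood of v (v together with its neighbors). -/
/-- A maximal independent set is dominating: every vertex outside has a neighbor inside. -/
lemma IsMaxIndepSet.dominating {V : Type*} {G : SimpleGraph V} {I : Set V}
    (hI : IsMaxIndepSet G I) {w : V} (hw : w ∉ I) : ∃ u ∈ I, G.Adj w u := by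
  by_contra h
  push_neg at h
  have hind : ∀ x ∈ insert w I, ∀ y ∈ insert w I, ¬ G.Adj x y := by
    intro x hx y hy
    rcases hx with rfl | hx
    · rcases hy with rfl | hy
      · exact fun h' => G.irrefl h'
      · exact h y hy
    · rcases hy with rfl | hy
      · exact fun h' => h x hx h'.symm
      · exact hI.1 x hx y hy
  have := hI.2 _ hind (Set.subset_insert _ _)
  exact hw (this ▸ Set.mem_insert w I)

/-- `m(G) ≤ m(G − v) + m(G − N[v])`, where `G − X` is the induced subgraph on the complement
of `X` and `N[v]` is the closed neighborhood of `v`. -/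
theorem misCount_le_deleteVert_add_deleteClosedNbhd {V : Type*} [Fintype V]
    (G : SimpleGraph V) (v : V) :
    misCount G ≤
      misCount (G.induce ({v}ᶜ : Set V)) +
      misCount (G.induce ((insert v (G.neighborSet v))ᶜ : Set V)) := by
  classical
  set s₁ : Set V := ({v}ᶜ : Set V) with hs₁
  set s₂ : Set V := ((insert v (G.neighborSet v))ᶜ : Set V) with hs₂
  -- Case A: v ∉ I
  have hA : ∀ (I : Set V), IsMaxIndepSet G I → v ∉ I →
      IsMaxIndepSet (G.induce s₁) {x : s₁ | (x : V) ∈ I} := by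
    intro I hI hv
    constructor
    · intro x hx y hy hadj
      exact hI.1 x hx y hy hadj
    · intro J hJ hsub
      ext w
      refine ⟨fun hw => ?_, fun hw => hsub hw⟩
      by_contra hwI
      obtain ⟨u, huI, hadj⟩ := hI.dominating hwI
      have huv : u ∈ s₁ := by
        simp only [hs₁, Set.mem_compl_iff, Set.mem_singleton_iff]
        rintro rfl; exact hv huI
      have : (⟨u, huv⟩ : s₁) ∈ J := hsub huI
      exact hJ w hw ⟨u, huv⟩ this hadj
  -- Case B: v ∈ I
  have hB : ∀ (I : Set V), IsMaxIndepSet G I → v ∈ I →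
      IsMaxIndepSet (G.induce s₂) {x : s₂ | (x : V) ∈ I} := by
    intro I hI hv
    constructor
    · intro x hx y hy hadj
      exact hI.1 x hx y hy hadj
    · intro J hJ hsub
      ext w
      refine ⟨fun hw => ?_, fun hw => hsub hw⟩
      by_contra hwI
      obtain ⟨u, huI, hadj⟩ := hI.dominating hwI
      have huv : u ∈ s₂ := by
        simp only [hs₂, Set.mem_compl_iff, Set.mem_insert_iff, SimpleGraph.mem_neighborSet,
          not_or]
        constructor
        · rintro rfl
          have : (w : V) ∈ s₂ := w.2
          simp only [hs₂, Set.mem_compl_iff, Set.mem_insert_iff,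
            SimpleGraph.mem_neighborSet, not_or] at this
          exact this.2 hadj.symm
        · intro hvu
          exact hI.1 v hv u huI hvu
      have : (⟨u, huv⟩ : s₂) ∈ J := hsub huI
      exact hJ w hw ⟨u, huv⟩ this hadj
  -- the injection
  let F : {I : Set V // IsMaxIndepSet G I} →
      {I : Set s₁ // IsMaxIndepSet (G.induce s₁) I} ⊕
      {I : Set s₂ // IsMaxIndepSet (G.induce s₂) I} := fun I =>
    if hv : v ∈ I.1 then Sum.inr ⟨{x : s₂ | (x : V) ∈ I.1}, hB I.1 I.2 hv⟩
    else Sum.inl ⟨{x : s₁ | (x : V) ∈ I.1}, hA I.1 I.2 hv⟩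
  have hFinj : Function.Injective F := by
    intro I₁ I₂ h
    by_cases h₁ : v ∈ I₁.1 <;> by_cases h₂ : v ∈ I₂.1 <;>
      simp only [F, h₁, h₂, dif_pos, dif_neg, not_false_iff, Sum.inr.injEq, Sum.inl.injEq, Subtype.mk.injEq] at h
    · -- both contain v
      have hset : {x : s₂ | (x : V) ∈ I₁.1} = {x : s₂ | (x : V) ∈ I₂.1} := h
      have key : ∀ (A B : Set V), IsMaxIndepSet G A → IsMaxIndepSet G B → v ∈ A → v ∈ B →
          {x : s₂ | (x : V) ∈ A} ⊆ {x : s₂ | (x : V) ∈ B} → A ⊆ B := by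
        intro A B hAm hBm hvA hvB hss u huA
        rcases eq_or_ne u v with rfl | huv
        · exact hvB
        · have hus : u ∈ s₂ := by
            simp only [hs₂, Set.mem_compl_iff, Set.mem_insert_iff,
              SimpleGraph.mem_neighborSet, not_or]
            exact ⟨huv, fun hadj => hAm.1 v hvA u huA hadj⟩
          exact hss (show (⟨u, hus⟩ : s₂) ∈ _ from huA)
      apply Subtype.ext
      exact le_antisymm (key _ _ I₁.2 I₂.2 h₁ h₂ hset.le) (key _ _ I₂.2 I₁.2 h₂ h₁ hset.ge)
    · exact absurd h (by simp)
    · exact absurd h (by simp)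
    · -- neither contains v
      have hset : {x : s₁ | (x : V) ∈ I₁.1} = {x : s₁ | (x : V) ∈ I₂.1} := h
      have key : ∀ (A B : Set V), v ∉ A →
          {x : s₁ | (x : V) ∈ A} ⊆ {x : s₁ | (x : V) ∈ B} → A ⊆ B := by
        intro A B hvA hss u huA
        have hus : u ∈ s₁ := by
          simp only [hs₁, Set.mem_compl_iff, Set.mem_singleton_iff]
          rintro rfl; exact hvA huA
        exact hss (show (⟨u, hus⟩ : s₁) ∈ _ from huA)
      apply Subtype.ext
      exact le_antisymm (key _ _ h₁ hset.le) (key _ _ h₂ hset.ge)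
  calc misCount G ≤ Nat.card ({I : Set s₁ // IsMaxIndepSet (G.induce s₁) I} ⊕
      {I : Set s₂ // IsMaxIndepSet (G.induce s₂) I}) :=
        Nat.card_le_card_of_injective F hFinj
    _ = _ := Nat.card_sum
end
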